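/- arXiv:1105.5598 — 6 statements merged into one kernel-verified Lean document; each statement's English description precedes it below -/
import Mathlib

section
/- Let f be a complex polynomial of degree d ≥ 2. Then: (a) for every z in the basin of infinity X_o(f), the limit g(z) = lim_{n→∞} (f^n)'(z)/(2·d^n·f^n(z)) exists; (b) the resulting function g is holomorphic on X_o(f); and (c) for z ∈ X_o(f), g(z) = 0 if and only if z ∈ Precrit(f). -/
open Filter Topology MeasureTheory Set

/-- The Schwarzian derivative of a holomorphic function. -/
noncomputable def schwarzian (F : ℂ → ℂ) (z : ℂ) : ℂ :=
  iteratedDeriv 3 F z / deriv F z - (3/2) * (iteratedDeriv 2 F z / deriv F z)^2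

/-- The union of all backward orbits of the critical points:
`Precrit(f) = {c : (f^n)'(c) = 0 for some n ≥ 1}`. -/
def precrit (f : ℂ → ℂ) : Set ℂ :=
  {c : ℂ | ∃ n : ℕ, 1 ≤ n ∧ deriv (f^[n]) c = 0}

/-- The basin of infinity of `f`. -/
def basinInf (f : ℂ → ℂ) : Set ℂ :=
  {z : ℂ | Tendsto (fun n : ℕ => ‖f^[n] z‖) atTop atTop}

/-- `f` is affinely conjugate to `z ↦ z ^ d`. -/
def conjToPow (f : ℂ → ℂ) (d : ℕ) : Prop :=
  ∃ a b : ℂ, a ≠ 0 ∧ ∀ z : ℂ, f (a * z + b) = a * z ^ d + b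

/-
With `a n z = (f^n)'(z) / (2 d^n f^n(z))` the chain rule gives `a (n+1) z = a n z · q (f^n z)`
for `q w = w f'(w) / (d f(w))`, and `q w = 1 + O(1/w)` because `w f' - d f` has degree `< d`.
Once `‖f^N z‖ > R` the orbit at least doubles its norm at each step, so `∏ₖ q (f^(N+k) z)`
converges locally uniformly on the open set `{‖f^N‖ > R}` to a holomorphic function without
zeros, and `g = a N · ∏ₖ q ∘ f^(N+k)` there. Hence `g` is holomorphic on the basin and vanishes
exactly where `(f^N)'` does.
-/

open Polynomial Bornology Asymptotics

section Iterate

variable {𝕜 : Type*} [NontriviallyNormedField 𝕜] {f : 𝕜 → 𝕜}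

theorem deriv_iterate_succ_apply (hf : Differentiable 𝕜 f) (n : ℕ) (x : 𝕜) :
    deriv (f^[n + 1]) x = deriv f (f^[n] x) * deriv (f^[n]) x := by
  rw [Function.iterate_succ', deriv_comp x (hf _) ((hf.iterate n) x)]

theorem deriv_iterate_eq_zero_of_le (hf : Differentiable 𝕜 f) {n m : ℕ} {x : 𝕜}
    (h : deriv (f^[n]) x = 0) (hnm : n ≤ m) : deriv (f^[m]) x = 0 := by
  induction m, hnm using Nat.le_induction with
  | base => exact h
  | succ m _ ih => rw [deriv_iterate_succ_apply hf, ih, mul_zero]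

end Iterate

theorem two_pow_mul_norm_le_norm_iterate {E : Type*} [SeminormedAddCommGroup E] {f : E → E}
    {R : ℝ} (hR : 0 ≤ R) (hf : ∀ w, R < ‖w‖ → 2 * ‖w‖ ≤ ‖f w‖) {z : E} (hz : R < ‖z‖) (k : ℕ) :
    2 ^ k * ‖z‖ ≤ ‖f^[k] z‖ := by
  induction k with
  | zero => simp
  | succ k ih =>
    have hk : R < ‖f^[k] z‖ := hz.trans_le (le_mul_of_one_le_left (hR.trans hz.le)
      (one_le_pow₀ one_le_two) |>.trans ih)
    rw [Function.iterate_succ_apply', pow_succ']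
    calc 2 * 2 ^ k * ‖z‖ = 2 * (2 ^ k * ‖z‖) := mul_assoc _ _ _
      _ ≤ 2 * ‖f^[k] z‖ := by gcongr
      _ ≤ ‖f (f^[k] z)‖ := hf _ hk

theorem exists_lt_norm_iterate_of_mem_basinInf {f : ℂ → ℂ} {z : ℂ} (hz : z ∈ basinInf f) (R : ℝ) :
    ∃ N, 1 ≤ N ∧ R < ‖f^[N] z‖ :=
  ((eventually_ge_atTop 1).and (hz.eventually_gt_atTop R)).exists

/-- `∂/∂z` of `log |f^n z| / d ^ n`; its limit is `∂G_f/∂z`. -/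
noncomputable def greenDerivApprox (f : ℂ → ℂ) (d n : ℕ) (z : ℂ) : ℂ :=
  deriv (f^[n]) z / (2 * (d : ℂ) ^ n * f^[n] z)

noncomputable def greenDeriv (f : ℂ → ℂ) (d : ℕ) (z : ℂ) : ℂ :=
  limUnder atTop (greenDerivApprox f d · z)

noncomputable def growthRatio (f : ℂ → ℂ) (d : ℕ) (w : ℂ) : ℂ :=
  w * deriv f w / (d * f w)

theorem greenDerivApprox_succ {f : ℂ → ℂ} (hf : Differentiable ℂ f) (d n : ℕ) {z : ℂ}
    (hz : f^[n] z ≠ 0) :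
    greenDerivApprox f d (n + 1) z = greenDerivApprox f d n z * growthRatio f d (f^[n] z) := by
  simp only [greenDerivApprox, growthRatio, deriv_iterate_succ_apply hf,
    Function.iterate_succ_apply', div_eq_mul_inv, mul_inv, pow_succ]
  field_simp

theorem differentiableAt_growthRatio {f : ℂ → ℂ} (hf : Differentiable ℂ f) {d : ℕ} {w : ℂ}
    (hw : growthRatio f d w ≠ 0) : DifferentiableAt ℂ (growthRatio f d) w := by
  have hden : (d : ℂ) * f w ≠ 0 := fun h ↦ hw (by simp [growthRatio, h])
  exact (differentiableAt_id.mul (hf.deriv w)).div ((hf w).const_mul _) hden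

theorem differentiableAt_greenDerivApprox {f : ℂ → ℂ} (hf : Differentiable ℂ f) {d n : ℕ}
    {z : ℂ} (hd : d ≠ 0) (hz : f^[n] z ≠ 0) : DifferentiableAt ℂ (greenDerivApprox f d n) z :=
  ((hf.iterate n).deriv z).div (((hf.iterate n) z).const_mul _) (by simp [hd, hz])

/-- What the argument uses of a polynomial `f` of degree `d`, outside the disc of radius `R`. -/
structure EscapeBounds (f : ℂ → ℂ) (d : ℕ) (R C : ℝ) : Prop where
  pos : 0 < R
  two_mul_norm_le : ∀ w, R < ‖w‖ → 2 * ‖w‖ ≤ ‖f w‖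
  norm_growthRatio_sub_one_le : ∀ w, R < ‖w‖ → ‖growthRatio f d w - 1‖ ≤ C * ‖w‖⁻¹
  growthRatio_ne_zero : ∀ w, R < ‖w‖ → growthRatio f d w ≠ 0

noncomputable def growthProduct (f : ℂ → ℂ) (d : ℕ) (w : ℂ) : ℂ :=
  ∏' k, growthRatio f d (f^[k] w)

namespace EscapeBounds

variable {f : ℂ → ℂ} {d : ℕ} {R C : ℝ}

theorem lt_norm_iterate (h : EscapeBounds f d R C) {w : ℂ} (hw : R < ‖w‖) (k : ℕ) :
    R < ‖f^[k] w‖ :=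
  hw.trans_le <| le_mul_of_one_le_left (h.pos.le.trans hw.le) (one_le_pow₀ one_le_two) |>.trans
    (two_pow_mul_norm_le_norm_iterate h.pos.le h.two_mul_norm_le hw k)

theorem iterate_ne_zero (h : EscapeBounds f d R C) {w : ℂ} (hw : R < ‖w‖) (k : ℕ) :
    f^[k] w ≠ 0 :=
  norm_pos_iff.mp (h.pos.trans (h.lt_norm_iterate hw k))

theorem ne_zero (h : EscapeBounds f d R C) : d ≠ 0 := by
  rintro rfl
  have hw : R < ‖((R + 1 : ℝ) : ℂ)‖ := by
    rw [Complex.norm_real, Real.norm_of_nonneg (by linarith [h.pos])]; linarith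
  exact h.growthRatio_ne_zero _ hw (by simp [growthRatio])

theorem norm_growthRatio_iterate_sub_one_le (h : EscapeBounds f d R C) {w : ℂ} (hw : R < ‖w‖)
    (k : ℕ) : ‖growthRatio f d (f^[k] w) - 1‖ ≤ C * R⁻¹ * (1 / 2) ^ k := by
  have hk := h.lt_norm_iterate hw k
  have hC : 0 ≤ C := nonneg_of_mul_nonneg_left
    ((norm_nonneg _).trans (h.norm_growthRatio_sub_one_le _ hk)) (inv_pos.mpr (h.pos.trans hk))
  calc ‖growthRatio f d (f^[k] w) - 1‖ ≤ C * ‖f^[k] w‖⁻¹ := h.norm_growthRatio_sub_one_le _ hk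
    _ ≤ C * (2 ^ k * R)⁻¹ := by
      gcongr
      · exact mul_pos (pow_pos two_pos k) h.pos
      · exact (mul_le_mul_of_nonneg_left hw.le (by positivity)).trans
          (two_pow_mul_norm_le_norm_iterate h.pos.le h.two_mul_norm_le hw k)
    _ = C * R⁻¹ * (1 / 2) ^ k := by rw [mul_inv, one_div, inv_pow]; ring

theorem hasProdLocallyUniformlyOn_growthProduct (h : EscapeBounds f d R C)
    (hf : Differentiable ℂ f) :
    HasProdLocallyUniformlyOn (fun k w ↦ growthRatio f d (f^[k] w)) (growthProduct f d)
      {w | R < ‖w‖} := by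
  have hcont (k : ℕ) : ContinuousOn (fun w ↦ growthRatio f d (f^[k] w) - 1) {w | R < ‖w‖} :=
    fun w hw ↦ ((differentiableAt_growthRatio hf (h.growthRatio_ne_zero _
      (h.lt_norm_iterate hw k))).comp w ((hf.iterate k) w)).sub_const 1
      |>.continuousAt.continuousWithinAt
  have key := Summable.hasProdLocallyUniformlyOn_nat_one_add
    (isOpen_lt continuous_const continuous_norm) (summable_geometric_two.mul_left (C * R⁻¹))
    (Eventually.of_forall fun k w hw ↦ h.norm_growthRatio_iterate_sub_one_le hw k) hcont
  simp only [add_sub_cancel] at key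
  exact key

theorem differentiableOn_growthProduct (h : EscapeBounds f d R C) (hf : Differentiable ℂ f) :
    DifferentiableOn ℂ (growthProduct f d) {w | R < ‖w‖} := by
  refine (h.hasProdLocallyUniformlyOn_growthProduct hf).differentiableOn
    (Eventually.of_forall fun s ↦ ?_) (isOpen_lt continuous_const continuous_norm)
  refine DifferentiableOn.fun_finsetProd fun k _ w hw ↦ ?_
  exact ((differentiableAt_growthRatio hf (h.growthRatio_ne_zero _ (h.lt_norm_iterate hw k))).comp
    w ((hf.iterate k) w)).differentiableWithinAt

theorem growthProduct_ne_zero (h : EscapeBounds f d R C) {w : ℂ} (hw : R < ‖w‖) :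
    growthProduct f d w ≠ 0 := by
  have hsum : Summable fun k ↦ ‖growthRatio f d (f^[k] w) - 1‖ :=
    (summable_geometric_two.mul_left (C * R⁻¹)).of_nonneg_of_le
      (fun _ ↦ norm_nonneg _) (h.norm_growthRatio_iterate_sub_one_le hw)
  have := tprod_one_add_ne_zero_of_summable
    (fun k ↦ by simpa using h.growthRatio_ne_zero _ (h.lt_norm_iterate hw k)) hsum
  simp only [add_sub_cancel] at this
  exact this

theorem greenDerivApprox_add (h : EscapeBounds f d R C) (hf : Differentiable ℂ f) {N : ℕ}
    {z : ℂ} (hz : R < ‖f^[N] z‖) (k : ℕ) :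
    greenDerivApprox f d (k + N) z =
      greenDerivApprox f d N z * ∏ j ∈ Finset.range k, growthRatio f d (f^[j] (f^[N] z)) := by
  induction k with
  | zero => simp
  | succ k ih =>
    have hkN : f^[k + N] z = f^[k] (f^[N] z) := Function.iterate_add_apply f k N z
    rw [add_right_comm, greenDerivApprox_succ hf d _ (hkN ▸ h.iterate_ne_zero hz k), ih, hkN,
      Finset.prod_range_succ, mul_assoc]

theorem tendsto_greenDerivApprox (h : EscapeBounds f d R C) (hf : Differentiable ℂ f) {N : ℕ}
    {z : ℂ} (hz : R < ‖f^[N] z‖) :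
    Tendsto (greenDerivApprox f d · z) atTop
      (𝓝 (greenDerivApprox f d N z * growthProduct f d (f^[N] z))) := by
  rw [← tendsto_add_atTop_iff_nat N]
  simp_rw [h.greenDerivApprox_add hf hz]
  exact ((h.hasProdLocallyUniformlyOn_growthProduct hf).hasProd hz).tendsto_prod_nat.const_mul _

theorem greenDeriv_eq (h : EscapeBounds f d R C) (hf : Differentiable ℂ f) {N : ℕ} {z : ℂ}
    (hz : R < ‖f^[N] z‖) :
    greenDeriv f d z = greenDerivApprox f d N z * growthProduct f d (f^[N] z) :=
  (h.tendsto_greenDerivApprox hf hz).limUnder_eq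

theorem tendsto_greenDeriv (h : EscapeBounds f d R C) (hf : Differentiable ℂ f) {z : ℂ}
    (hz : z ∈ basinInf f) : Tendsto (greenDerivApprox f d · z) atTop (𝓝 (greenDeriv f d z)) := by
  obtain ⟨N, -, hN⟩ := exists_lt_norm_iterate_of_mem_basinInf hz R
  rw [h.greenDeriv_eq hf hN]
  exact h.tendsto_greenDerivApprox hf hN

theorem differentiableOn_greenDeriv (h : EscapeBounds f d R C) (hf : Differentiable ℂ f) :
    DifferentiableOn ℂ (greenDeriv f d) (basinInf f) := by
  intro z hz
  obtain ⟨N, -, hN⟩ := exists_lt_norm_iterate_of_mem_basinInf hz R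
  have hU : IsOpen {z | R < ‖f^[N] z‖} :=
    isOpen_lt continuous_const (hf.iterate N).continuous.norm
  have hlocal : (fun z ↦ greenDerivApprox f d N z * growthProduct f d (f^[N] z)) =ᶠ[𝓝 z]
      greenDeriv f d :=
    eventually_of_mem (hU.mem_nhds hN) fun w hw ↦ (h.greenDeriv_eq hf hw).symm
  have happrox : DifferentiableAt ℂ (greenDerivApprox f d N) z :=
    differentiableAt_greenDerivApprox hf h.ne_zero (h.iterate_ne_zero hN 0)
  have hproduct : DifferentiableAt ℂ (growthProduct f d) (f^[N] z) :=
    (h.differentiableOn_growthProduct hf _ hN).differentiableAt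
      ((isOpen_lt continuous_const continuous_norm).mem_nhds hN)
  exact ((happrox.mul (hproduct.comp z ((hf.iterate N) z))).congr_of_eventuallyEq
    hlocal.symm).differentiableWithinAt

theorem greenDeriv_eq_zero_iff (h : EscapeBounds f d R C) (hf : Differentiable ℂ f) {z : ℂ}
    (hz : z ∈ basinInf f) : greenDeriv f d z = 0 ↔ z ∈ precrit f := by
  constructor
  · intro hzero
    obtain ⟨N, hN1, hN⟩ := exists_lt_norm_iterate_of_mem_basinInf hz R
    have hN0 : f^[N] z ≠ 0 := h.iterate_ne_zero hN 0
    rw [h.greenDeriv_eq hf hN, mul_eq_zero, or_iff_left (h.growthProduct_ne_zero hN),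
      greenDerivApprox, div_eq_zero_iff, or_iff_left (by simp [h.ne_zero, hN0])] at hzero
    exact ⟨N, hN1, hzero⟩
  · rintro ⟨n, -, hn⟩
    have hvanish : ∀ᶠ m in atTop, greenDerivApprox f d m z = 0 :=
      (eventually_ge_atTop n).mono fun m hm ↦ by
        rw [greenDerivApprox, deriv_iterate_eq_zero_of_le hf hn hm, zero_div]
    exact tendsto_nhds_unique (h.tendsto_greenDeriv hf hz)
      (tendsto_const_nhds.congr' (hvanish.mono fun m hm ↦ hm.symm))

end EscapeBounds

namespace Polynomial

theorem coeff_X_mul_derivative {R : Type*} [CommSemiring R] (p : R[X]) (m : ℕ) :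
    (X * derivative p).coeff m = m * p.coeff m := by
  cases m with
  | zero => simp
  | succ k => rw [coeff_X_mul, coeff_derivative]; push_cast; ring

theorem degree_X_mul_derivative_sub_lt {R : Type*} [CommRing R] {p : R[X]} (hp : p ≠ 0) :
    (X * derivative p - C (p.natDegree : R) * p).degree < p.degree := by
  rw [degree_eq_natDegree hp, degree_lt_iff_coeff_zero]
  intro m hm
  rw [coeff_sub, coeff_C_mul, coeff_X_mul_derivative, ← sub_mul]
  rcases hm.eq_or_lt with rfl | hlt
  · rw [sub_self, zero_mul]
  · rw [coeff_eq_zero_of_natDegree_lt hlt, mul_zero]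

theorem eventually_mul_norm_le_norm_eval {p : ℂ[X]} (hp : 1 < p.degree) {c : ℝ} (hc : 0 < c) :
    ∀ᶠ w in cobounded ℂ, c * ‖w‖ ≤ ‖p.eval w‖ := by
  have hX : (X : ℂ[X]).degree < p.degree := by rwa [degree_X]
  filter_upwards [(isLittleO_cobounded_of_degree_lt hX).def (inv_pos.mpr hc)] with w hw
  rw [eval_X, inv_mul_eq_div, le_div_iff₀' hc] at hw
  exact hw

theorem eventually_eval_ne_zero {p : ℂ[X]} (hp : 0 < p.degree) :
    ∀ᶠ w in cobounded ℂ, p.eval w ≠ 0 :=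
  (p.tendsto_norm_atTop hp tendsto_norm_cobounded_atTop).eventually_gt_atTop 0 |>.mono
    fun _ hw ↦ norm_pos_iff.mp hw

theorem isBigO_growthRatio_sub_one {p : ℂ[X]} (hp : 0 < p.degree) :
    (fun w ↦ growthRatio (fun z ↦ p.eval z) p.natDegree w - 1) =O[cobounded ℂ] (·⁻¹) := by
  have hp0 : p ≠ 0 := ne_zero_of_degree_gt hp
  set s := X * derivative p - C (p.natDegree : ℂ) * p
  set D : ℂ → ℂ := fun w ↦ w⁻¹ * ((p.natDegree : ℂ) * p.eval w)⁻¹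
  have hs : (s * X).eval =O[cobounded ℂ] p.eval := isBigO_cobounded_of_degree_le <| by
    rw [degree_mul_X]; exact Nat.WithBot.add_one_le_of_lt (degree_X_mul_derivative_sub_lt hp0)
  have hd : (p.natDegree : ℂ) ≠ 0 := Nat.cast_ne_zero.mpr (natDegree_pos_iff_degree_pos.mpr hp).ne'
  have hw0 : ∀ᶠ w : ℂ in cobounded ℂ, w ≠ 0 :=
    (eventually_cobounded_le_norm 1).mono fun w hw ↦ norm_pos_iff.mp (one_pos.trans_le hw)
  have hratio : (fun w ↦ (s * X).eval w * D w) =ᶠ[cobounded ℂ]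
      fun w ↦ growthRatio (fun z ↦ p.eval z) p.natDegree w - 1 := by
    filter_upwards [hw0, eventually_eval_ne_zero hp] with w hw hpw
    simp only [growthRatio, Polynomial.deriv, D, s, eval_mul, eval_sub, eval_X, eval_C]
    field_simp
  have hlead : (fun w ↦ p.eval w * D w) =ᶠ[cobounded ℂ] fun w ↦ (p.natDegree : ℂ)⁻¹ * w⁻¹ := by
    filter_upwards [eventually_eval_ne_zero hp] with w hpw
    simp only [D]
    field_simp
  exact ((hs.mul (isBigO_refl D _)).congr' hratio hlead).trans
    ((isBigO_refl _ _).const_mul_left _)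

theorem exists_escapeBounds {p : ℂ[X]} (hp : 2 ≤ p.natDegree) :
    ∃ R C, EscapeBounds (fun z ↦ p.eval z) p.natDegree R C := by
  have hdeg : (2 : WithBot ℕ) ≤ p.degree :=
    (WithBot.coe_le_coe.mpr hp).trans_eq (degree_eq_natDegree (ne_zero_of_natDegree_gt hp)).symm
  have hO := isBigO_growthRatio_sub_one (p := p) (lt_of_lt_of_le (by decide) hdeg)
  obtain ⟨C, hC⟩ := hO.bound
  have hne : ∀ᶠ w in cobounded ℂ, growthRatio (fun z ↦ p.eval z) p.natDegree w ≠ 0 :=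
    (tendsto_sub_nhds_zero_iff.mp (hO.trans_tendsto tendsto_inv₀_cobounded)).eventually_ne
      one_ne_zero
  obtain ⟨r, -, hr⟩ := Filter.hasBasis_cobounded_norm.eventually_iff.mp
    ((eventually_mul_norm_le_norm_eval (lt_of_lt_of_le (by decide) hdeg) two_pos).and
      (hC.and hne))
  have hfar : ∀ w : ℂ, max r 1 < ‖w‖ → _ := fun w hw ↦ hr ((le_max_left r 1).trans hw.le)
  exact ⟨max r 1, C, lt_max_of_lt_right one_pos, fun w hw ↦ (hfar w hw).1,
    fun w hw ↦ by simpa using (hfar w hw).2.1, fun w hw ↦ (hfar w hw).2.2⟩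

end Polynomial

/-- For a polynomial `f` of degree `d ≥ 2`, the limit
`g(z) = lim (f^n)'(z)/(2 d^n f^n(z))` exists at every point of the basin of infinity,
the resulting function is holomorphic there, and it vanishes exactly at the
precritical points of the basin. -/
theorem stmt3 (d : ℕ) (hd : 2 ≤ d) (p : Polynomial ℂ) (hdeg : p.natDegree = d)
    (f : ℂ → ℂ) (hf : ∀ z, f z = p.eval z) :
    ∃ g : ℂ → ℂ,
      (∀ z ∈ basinInf f,
        Tendsto (fun n : ℕ => deriv (f^[n]) z / (2 * (d : ℂ) ^ n * f^[n] z)) atTop (𝓝 (g z))) ∧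
      DifferentiableOn ℂ g (basinInf f) ∧
      (∀ z ∈ basinInf f, (g z = 0 ↔ z ∈ precrit f)) := by
  obtain rfl : f = fun z ↦ p.eval z := funext hf
  subst hdeg
  obtain ⟨R, C, h⟩ := Polynomial.exists_escapeBounds hd
  exact ⟨greenDeriv _ p.natDegree, fun z hz ↦ h.tendsto_greenDeriv p.differentiable hz,
    h.differentiableOn_greenDeriv p.differentiable,
    fun z hz ↦ h.greenDeriv_eq_zero_iff p.differentiable hz⟩
end

section
/- Let f and g be complex polynomials of the same degree d ≥ 2. The following are equivalent: (i) there exist a, b ∈ ℂ with a ≠ 0 such that S_f(z) = a²·S_g(az + b) for every z ∈ ℂ with f'(z) ≠ 0 and g'(az + b) ≠ 0; (ii) there exist affine maps A(z) = az + b and B(z) = cz + e with a ≠ 0, c ≠ 0 such that f = B ∘ g ∘ A; (iii) there exist a, b, c ∈ ℂ with a ≠ 0, c ≠ 0 such that f'(z) = c·g'(az + b) for all z ∈ ℂ (i.e., f and g have the same critical set, counted with multiplicities, up to the affine change of variable A(z) = az + b). -/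
open Filter Topology MeasureTheory Set

/-!
Only `P = f'` enters the Schwarzian: `S_f = P''/P - (3/2)(P'/P)²`. After absorbing the affine map
into `g`, with `Q = g'`, clearing denominators in `S_f = S_g` gives `2 W' P Q = 3 W (P Q)'` for the
Wronskian `W = P Q' - P' Q`. Comparing leading coefficients, a nonzero `W` would satisfy
`2 deg W = 3 deg (P Q)`, which contradicts `deg W < deg (P Q)`. Hence `W = 0`, i.e. `(P / Q)' = 0`,
and `P` is a constant multiple of `Q`. The other implications are the chain rule for affine maps
and the integration of `f' = c g'`.
-/

namespace Polynomial

section CharZero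

variable {R : Type*} [CommRing R] [IsDomain R] [CharZero R]

theorem mul_natDegree_eq_of_derivative_mul_eq {α β : R} {r s : R[X]} (hr : r ≠ 0) (hs : s ≠ 0)
    (h : C α * derivative r * s = C β * r * derivative s) :
    α * r.natDegree = β * s.natDegree := by
  rcases Nat.eq_zero_or_pos r.natDegree with hr0 | hr0
  · rw [derivative_eq_zero.2 hr0] at h
    simp_all [eq_comm (a := (0 : R[X]))]
  rcases Nat.eq_zero_or_pos s.natDegree with hs0 | hs0
  · rw [derivative_eq_zero.2 hs0] at h
    simp_all
  set N := r.natDegree - 1 + s.natDegree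
  have hcoeff_left :
      (derivative r * s).coeff N = r.leadingCoeff * s.leadingCoeff * r.natDegree := by
    have := coeff_mul_degree_add_degree (derivative r) s
    rw [natDegree_derivative, leadingCoeff_derivative] at this
    rw [this]; ring
  have hcoeff_right :
      (r * derivative s).coeff N = r.leadingCoeff * s.leadingCoeff * s.natDegree := by
    have := coeff_mul_degree_add_degree r (derivative s)
    rw [natDegree_derivative, leadingCoeff_derivative] at this
    rw [show N = r.natDegree + (s.natDegree - 1) by omega, this]; ring
  have hc := congrArg (coeff · N) h
  simp only [mul_assoc, coeff_C_mul, hcoeff_left, hcoeff_right] at hc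
  have hlc : r.leadingCoeff * s.leadingCoeff ≠ 0 := by simp [hr, hs]
  apply mul_left_cancel₀ hlc
  linear_combination hc

theorem wronskian_eq_zero_of_two_mul_derivative_mul_eq {p q : R[X]} (hp : p ≠ 0) (hq : q ≠ 0)
    (h : 2 * derivative (wronskian p q) * (p * q) = 3 * wronskian p q * derivative (p * q)) :
    wronskian p q = 0 := by
  by_contra hw
  have hdeg := mul_natDegree_eq_of_derivative_mul_eq (α := 2) (β := 3) hw (mul_ne_zero hp hq)
    (by simpa only [map_ofNat] using h)
  have hlt := natDegree_wronskian_lt_add hw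
  rw [natDegree_mul hp hq] at hdeg
  have : 2 * (wronskian p q).natDegree = 3 * (p.natDegree + q.natDegree) := by exact_mod_cast hdeg
  omega

end CharZero

theorem exists_eq_C_mul_of_wronskian_eq_zero {K : Type*} [Field K] [CharZero K] {p q : K[X]}
    (hp : p ≠ 0) (hq : q ≠ 0) (h : wronskian p q = 0) : ∃ c, c ≠ 0 ∧ p = C c * q := by
  have hdeg : ∀ r : K[X], wronskian r q = 0 → r ≠ 0 → r.natDegree = q.natDegree := by
    intro r hr hr0
    have := mul_natDegree_eq_of_derivative_mul_eq (α := 1) (β := 1) hr0 hq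
      (by rw [wronskian, sub_eq_zero] at hr; simp [hr, mul_comm])
    simpa using this
  have hlc : p.leadingCoeff / q.leadingCoeff ≠ 0 := by simp [hp, hq]
  refine ⟨_, hlc, sub_eq_zero.1 (by_contra fun hD => ?_)⟩
  have hWD : wronskian (p - C (p.leadingCoeff / q.leadingCoeff) * q) q = 0 := by
    simp only [wronskian, derivative_sub, derivative_C_mul] at h ⊢
    linear_combination h
  have hlt := natDegree_lt_natDegree hD <| degree_sub_lt_left
    (by rw [degree_C_mul hlc, degree_eq_natDegree hp, degree_eq_natDegree hq, hdeg p h hp])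
    hp (by rw [leadingCoeff_mul, leadingCoeff_C, div_mul_cancel₀ _ (leadingCoeff_ne_zero.2 hq)])
  rw [hdeg _ hWD hD, hdeg p h hp] at hlt
  exact hlt.false

end Polynomial

open Polynomial

theorem deriv_comp_mul_add {𝕜 F : Type*} [NontriviallyNormedField 𝕜] [NormedAddCommGroup F]
    [NormedSpace 𝕜 F] (g : 𝕜 → F) (a b x : 𝕜) :
    deriv (fun x => g (a * x + b)) x = a • deriv g (a * x + b) := by
  rw [deriv_comp_mul_left a (fun y => g (y + b)), deriv_comp_add_const]

theorem schwarzian_eq_deriv (F : ℂ → ℂ) (z : ℂ) :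
    schwarzian F z = deriv (deriv (deriv F)) z / deriv F z
      - 3 / 2 * (deriv (deriv F) z / deriv F z) ^ 2 := by
  simp only [schwarzian, iteratedDeriv_eq_iterate, Function.iterate_succ, Function.iterate_zero,
    Function.comp_apply, Function.id_def]

theorem schwarzian_eq_of_deriv_eq {f g : ℂ → ℂ} {a b c : ℂ} (hc : c ≠ 0)
    (h : ∀ z, deriv f z = c * deriv g (a * z + b)) (z : ℂ) :
    schwarzian f z = a ^ 2 * schwarzian g (a * z + b) := by
  have h1 : deriv f = fun z => c * deriv g (a * z + b) := funext h
  have h2 : deriv (deriv f) = fun z => c * (a * deriv (deriv g) (a * z + b)) := by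
    ext z; rw [h1, deriv_const_mul_field, deriv_comp_mul_add, smul_eq_mul]
  have h3 : deriv (deriv (deriv f)) z = c * (a ^ 2 * deriv (deriv (deriv g)) (a * z + b)) := by
    rw [h2, deriv_const_mul_field, deriv_const_mul_field, deriv_comp_mul_add, smul_eq_mul]; ring
  rw [schwarzian_eq_deriv, schwarzian_eq_deriv, h3, h2, h1, mul_div_mul_left _ _ hc,
    mul_div_mul_left _ _ hc]
  ring

theorem deriv_eq_of_eq_mul_comp_add {f g : ℂ → ℂ} {a b c e : ℂ}
    (h : ∀ z, f z = c * g (a * z + b) + e) (z : ℂ) :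
    deriv f z = c * a * deriv g (a * z + b) := by
  rw [funext h, deriv_add_const, deriv_const_mul_field, deriv_comp_mul_add, smul_eq_mul, mul_assoc]

theorem exists_eq_mul_comp_add_of_deriv_eq {f g : ℂ → ℂ} (hf : Differentiable ℂ f)
    (hg : Differentiable ℂ g) {a b c : ℂ} (ha : a ≠ 0)
    (h : ∀ z, deriv f z = c * deriv g (a * z + b)) :
    ∃ e, ∀ z, f z = c / a * g (a * z + b) + e := by
  have hA : Differentiable ℂ fun z => g (a * z + b) :=
    hg.comp ((differentiable_id.const_mul a).add_const b)
  refine ⟨f 0 - c / a * g (a * 0 + b), fun z => ?_⟩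
  have hconst := is_const_of_deriv_eq_zero (hf.sub (hA.const_mul (c / a))) (fun w => by
    rw [deriv_sub (hf w) ((hA w).const_mul _), deriv_const_mul_field, deriv_comp_mul_add,
      smul_eq_mul, h]; field_simp; ring) z 0
  simp only [Pi.sub_apply] at hconst
  linear_combination hconst

theorem exists_eq_mul_comp_add_iff_exists_deriv_eq {f g : ℂ → ℂ} (hf : Differentiable ℂ f)
    (hg : Differentiable ℂ g) :
    (∃ a b c e : ℂ, a ≠ 0 ∧ c ≠ 0 ∧ ∀ z, f z = c * g (a * z + b) + e) ↔
      ∃ a b c : ℂ, a ≠ 0 ∧ c ≠ 0 ∧ ∀ z, deriv f z = c * deriv g (a * z + b) := by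
  constructor
  · rintro ⟨a, b, c, e, ha, hc, h⟩
    exact ⟨a, b, c * a, ha, mul_ne_zero hc ha, deriv_eq_of_eq_mul_comp_add h⟩
  · rintro ⟨a, b, c, ha, hc, h⟩
    obtain ⟨e, he⟩ := exists_eq_mul_comp_add_of_deriv_eq hf hg ha h
    exact ⟨a, b, c / a, e, ha, div_ne_zero hc ha, he⟩

theorem schwarzian_eval_polynomial (s : ℂ[X]) (z : ℂ) :
    schwarzian (fun z => s.eval z) z =
      (derivative (derivative (derivative s))).eval z / (derivative s).eval z
        - 3 / 2 * ((derivative (derivative s)).eval z / (derivative s).eval z) ^ 2 := by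
  have hd : ∀ r : ℂ[X], deriv (fun z => r.eval z) = fun z => (derivative r).eval z :=
    fun r => funext fun _ => r.deriv
  simp only [schwarzian_eq_deriv, hd]

theorem exists_derivative_eq_C_mul_of_schwarzian_eq {p r : ℂ[X]} (hp : p.natDegree ≠ 0)
    (hr : r.natDegree ≠ 0)
    (h : ∀ z, (derivative p).eval z ≠ 0 → (derivative r).eval z ≠ 0 →
      schwarzian (fun z => p.eval z) z = schwarzian (fun z => r.eval z) z) :
    ∃ c, c ≠ 0 ∧ derivative p = C c * derivative r := by
  simp only [schwarzian_eval_polynomial] at h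
  set P := derivative p
  set Q := derivative r
  have hP : P ≠ 0 := derivative_ne_zero.2 hp
  have hQ : Q ≠ 0 := derivative_ne_zero.2 hr
  have hclear : ∀ (s : ℂ[X]) z, s.eval z ≠ 0 →
      2 * s.eval z ^ 2 * ((derivative (derivative s)).eval z / s.eval z
        - 3 / 2 * ((derivative s).eval z / s.eval z) ^ 2) =
      2 * s.eval z * (derivative (derivative s)).eval z - 3 * (derivative s).eval z ^ 2 :=
    fun s z hs => by field_simp
  -- multiplied by `P * Q` so that the identity also holds at the zeros of `P * Q`
  have hPQ : P * Q * (2 * derivative (wronskian P Q) * (P * Q)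
      - 3 * wronskian P Q * derivative (P * Q)) = 0 := by
    refine Polynomial.funext fun z => ?_
    by_cases hz : P.eval z = 0 ∨ Q.eval z = 0
    · rcases hz with hz | hz <;> simp [hz]
    push Not at hz
    obtain ⟨hPz, hQz⟩ := hz
    simp only [wronskian, derivative_mul, derivative_sub, eval_mul, eval_sub, eval_add, eval_ofNat,
      eval_zero]
    linear_combination (P.eval z * Q.eval z ^ 3) * hclear P z hPz
      - (P.eval z ^ 3 * Q.eval z) * hclear Q z hQz - 2 * (P.eval z * Q.eval z) ^ 3 * h z hPz hQz
  have hwronskian := sub_eq_zero.1 ((mul_eq_zero.1 hPQ).resolve_left (mul_ne_zero hP hQ))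
  exact exists_eq_C_mul_of_wronskian_eq_zero hP hQ
    (wronskian_eq_zero_of_two_mul_derivative_mul_eq hP hQ hwronskian)

theorem exists_deriv_eq_mul_deriv_comp_of_schwarzian_eq {p q : ℂ[X]} (hp : p.natDegree ≠ 0)
    (hq : q.natDegree ≠ 0) {a b : ℂ} (ha : a ≠ 0)
    (h : ∀ z, deriv (fun z => p.eval z) z ≠ 0 → deriv (fun z => q.eval z) (a * z + b) ≠ 0 →
      schwarzian (fun z => p.eval z) z = a ^ 2 * schwarzian (fun z => q.eval z) (a * z + b)) :
    ∃ c, c ≠ 0 ∧ ∀ z, deriv (fun z => p.eval z) z = c * deriv (fun z => q.eval z) (a * z + b) := by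
  set r := q.comp (C a * X + C b)
  have hr : (fun z => r.eval z) = fun z => q.eval (a * z + b) := by ext z; simp [r]
  have hr' : ∀ z, deriv (fun z => r.eval z) z = a * deriv (fun z => q.eval z) (a * z + b) := by
    intro z; rw [hr, deriv_comp_mul_add (fun z => q.eval z), smul_eq_mul]
  have hrdeg : r.natDegree ≠ 0 := by
    rwa [natDegree_comp, natDegree_add_C, natDegree_C_mul_X a ha, mul_one]
  obtain ⟨c, hc, hpr⟩ := exists_derivative_eq_C_mul_of_schwarzian_eq hp hrdeg fun z hpz hrz => by
    rw [← Polynomial.deriv] at hpz hrz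
    rw [hr'] at hrz
    rw [h z hpz (right_ne_zero_of_mul hrz), schwarzian_eq_of_deriv_eq ha hr']
  refine ⟨c * a, mul_ne_zero hc ha, fun z => ?_⟩
  rw [Polynomial.deriv, hpr, eval_mul, eval_C, ← Polynomial.deriv, hr', mul_assoc]

/-- For polynomials `f`, `g` of the same degree `d ≥ 2`, the following
are equivalent: (i) `S_f = A^*(S_g)` for some affine `A(z) = az+b`;
(ii) `f = B ∘ g ∘ A` for affine bijections `A`, `B`;
(iii) `f' (z) = c · g'(az+b)` for all `z` (same critical sets with multiplicities up to
an affine change of variable). -/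
theorem stmt7 (d : ℕ) (hd : 2 ≤ d) (p q : Polynomial ℂ)
    (hp : p.natDegree = d) (hq : q.natDegree = d)
    (f g : ℂ → ℂ) (hf : ∀ z, f z = p.eval z) (hg : ∀ z, g z = q.eval z) :
    ((∃ a b : ℂ, a ≠ 0 ∧ ∀ z : ℂ, deriv f z ≠ 0 → deriv g (a * z + b) ≠ 0 →
        schwarzian f z = a ^ 2 * schwarzian g (a * z + b)) ↔
      (∃ a b c e : ℂ, a ≠ 0 ∧ c ≠ 0 ∧ ∀ z : ℂ, f z = c * g (a * z + b) + e)) ∧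
    ((∃ a b c e : ℂ, a ≠ 0 ∧ c ≠ 0 ∧ ∀ z : ℂ, f z = c * g (a * z + b) + e) ↔
      (∃ a b c : ℂ, a ≠ 0 ∧ c ≠ 0 ∧ ∀ z : ℂ, deriv f z = c * deriv g (a * z + b))) := by
  obtain rfl : f = fun z => p.eval z := funext hf
  obtain rfl : g = fun z => q.eval z := funext hg
  have ii_iff_iii := exists_eq_mul_comp_add_iff_exists_deriv_eq p.differentiable q.differentiable
  refine ⟨?_, ii_iff_iii⟩
  rw [ii_iff_iii]
  refine ⟨fun ⟨a, b, ha, h⟩ => ?_, fun ⟨a, b, c, ha, hc, h⟩ => ?_⟩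
  · obtain ⟨c, hc, h⟩ := exists_deriv_eq_mul_deriv_comp_of_schwarzian_eq (by omega) (by omega) ha h
    exact ⟨a, b, c, ha, hc, h⟩
  · exact ⟨a, b, ha, fun z _ _ => schwarzian_eq_of_deriv_eq hc h z⟩
end

section
/- Let f be a complex polynomial of degree d ≥ 2. Then there exist finitely many polynomials g₁, …, g_m of degree d such that every polynomial g of degree d that is strongly equivalent to f (i.e., f^n ∼ g^n for all n ≥ 1) is affinely conjugate to some g_i, i.e., there is an affine bijection A(z) = az + b, a ≠ 0, with A ∘ g = g_i ∘ A. In other words, each strong equivalence class consists of finitely many affine conjugacy classes. -/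
open Filter Topology MeasureTheory Set

/-- Two maps are `sim`-related if one is obtained from the other by pre- and
post-composition with affine bijections. -/
def simAffine (F G : ℂ → ℂ) : Prop :=
  ∃ a b c e : ℂ, a ≠ 0 ∧ c ≠ 0 ∧ ∀ z : ℂ, F z = c * G (a * z + b) + e

/-!
Conjugate `f` to a monic centred polynomial `P`. If `P ∘ P ∼ g ∘ g`, then
`P ∘ P = (B ∘ g) ∘ (g ∘ A)`, and a decomposition into two factors of fixed degrees is unique up
to an affine map in the middle (in characteristic zero). This forces `g` to be conjugate to
`P(w z)` with `P(w z) = w ^ d P(z) + const`. If `P` has a nonzero coefficient in some degree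
`1 ≤ k ≤ d - 2`, then `w ^ (d - k) = 1`. Otherwise `P = z ^ d + c`: for `c = 0` all `P(w z)` are
conjugate to `P`, and for `c ≠ 0` comparing the decompositions of the third iterates gives
`w ^ d = 1`. So `w` always ranges over the `N`-th roots of unity for a fixed `N`.
-/

open Polynomial

section CommSemiring

variable {R : Type*} [CommSemiring R]

noncomputable def aff (a b : R) : R[X] := C a * X + C b

@[simp]
lemma eval_aff (a b z : R) : (aff a b).eval z = a * z + b := by simp [aff]

lemma aff_comp (a b : R) (p : R[X]) : (aff a b).comp p = C a * p + C b := by simp [aff]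

lemma aff_comp_aff (a b a' b' : R) :
    (aff a b).comp (aff a' b') = aff (a * a') (a * b' + b) := by
  rw [aff_comp]; simp only [aff, C_mul, C_add]; ring

lemma comp_aff (p : R[X]) (a b : R) : p.comp (aff a b) = (taylor b p).comp (C a * X) := by
  rw [taylor_apply, comp_assoc, add_comp, X_comp, C_comp, aff]

lemma coeff_comp_aff (p : R[X]) (a b : R) (k : ℕ) :
    (p.comp (aff a b)).coeff k = (taylor b p).coeff k * a ^ k := by
  rw [comp_aff, comp_C_mul_X_coeff]

lemma coeff_taylor_natDegree_sub_one (p : R[X]) (r : R) (hp : 0 < p.natDegree) :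
    (taylor r p).coeff (p.natDegree - 1)
      = p.coeff (p.natDegree - 1) + p.natDegree * p.leadingCoeff * r := by
  have hdeg : (hasseDeriv (p.natDegree - 1) p).natDegree < 2 :=
    (natDegree_hasseDeriv_le _ _).trans_lt (by omega)
  rw [taylor_coeff, eval_eq_sum_range' hdeg, Finset.sum_range_succ, Finset.sum_range_one,
    hasseDeriv_coeff, hasseDeriv_coeff, show 1 + (p.natDegree - 1) = p.natDegree by omega,
    Nat.choose_symm_of_eq_add (by omega : p.natDegree = (p.natDegree - 1) + 1)]
  simp only [zero_add, Nat.choose_self, Nat.choose_one_right, Nat.cast_one, one_mul, pow_zero,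
    mul_one, pow_one, leadingCoeff]

lemma comp_eq_eraseLead_comp_add (a b : R[X]) :
    a.comp b = a.eraseLead.comp b + C a.leadingCoeff * b ^ a.natDegree := by
  conv_lhs => rw [← eraseLead_add_C_mul_X_pow a]
  rw [add_comp, mul_comp, C_comp, X_pow_comp]

lemma natDegree_eraseLead_comp_le (a b : R[X]) :
    (a.eraseLead.comp b).natDegree ≤ (a.natDegree - 1) * b.natDegree :=
  natDegree_comp_le.trans (Nat.mul_le_mul_right _ (eraseLead_natDegree_le a))

lemma eq_X_pow_add_C_of_coeff_eq_zero {P : R[X]} {d : ℕ} (hd : 0 < d) (hPd : P.natDegree = d)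
    (hPm : P.Monic) (hmid : ∀ k, 0 < k → k < d → P.coeff k = 0) : P = X ^ d + C (P.coeff 0) := by
  ext k
  rcases Nat.eq_zero_or_pos k with rfl | hk
  · simp [coeff_X_pow, hd.ne]
  rw [coeff_add, coeff_X_pow, coeff_C, if_neg hk.ne', add_zero]
  rcases lt_trichotomy k d with hkd | rfl | hkd
  · rw [if_neg hkd.ne, hmid k hk hkd]
  · rw [if_pos rfl, ← hPd, hPm.coeff_natDegree]
  · rw [if_neg hkd.ne', coeff_eq_zero_of_natDegree_lt (hPd ▸ hkd)]

lemma natDegree_unicritical {d : ℕ} {u : R} (c : R) (hu : u ≠ 0) :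
    (C u * X ^ d + C c).natDegree = d := by
  rw [natDegree_add_C, natDegree_C_mul_X_pow d u hu]

lemma coeff_unicritical {d : ℕ} (u c : R) {k : ℕ} (hk0 : k ≠ 0) (hkd : k ≠ d) :
    (C u * X ^ d + C c).coeff k = 0 := by
  simp [coeff_X_pow, coeff_C, hk0, hkd]

lemma coeff_zero_unicritical {d : ℕ} (u c : R) (hd : d ≠ 0) :
    (C u * X ^ d + C c).coeff 0 = c := by
  simp [coeff_X_pow, hd.symm]

end CommSemiring

section Field

variable {K : Type*} [Field K]

lemma natDegree_aff {a : K} (b : K) (ha : a ≠ 0) : (aff a b).natDegree = 1 :=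
  natDegree_linear ha

lemma aff_comp_aff_inv {a : K} (b : K) (ha : a ≠ 0) :
    (aff a b).comp (aff a⁻¹ (-(a⁻¹ * b))) = X := by
  rw [aff_comp_aff, mul_inv_cancel₀ ha, mul_neg, mul_inv_cancel_left₀ ha, neg_add_cancel]
  simp [aff]

lemma aff_inv_comp_aff {a : K} (b : K) (ha : a ≠ 0) :
    (aff a⁻¹ (-(a⁻¹ * b))).comp (aff a b) = X := by
  rw [aff_comp_aff, inv_mul_cancel₀ ha, add_neg_cancel]
  simp [aff]

lemma aff_comp_eq_iff {a : K} {b : K} {p q : K[X]} (ha : a ≠ 0) :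
    (aff a b).comp p = q ↔ p = (aff a⁻¹ (-(a⁻¹ * b))).comp q := by
  constructor <;> rintro rfl
  · rw [← comp_assoc, aff_inv_comp_aff b ha, X_comp]
  · rw [← comp_assoc, aff_comp_aff_inv b ha, X_comp]

lemma comp_aff_eq_iff {a : K} {b : K} {p q : K[X]} (ha : a ≠ 0) :
    p.comp (aff a b) = q ↔ p = q.comp (aff a⁻¹ (-(a⁻¹ * b))) := by
  constructor <;> rintro rfl
  · rw [comp_assoc, aff_comp_aff_inv b ha, comp_X]
  · rw [comp_assoc, aff_inv_comp_aff b ha, comp_X]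

lemma exists_aff_comp_monic {b : K[X]} (hb : 0 < b.natDegree) :
    ∃ l m : K, ∃ b₀ : K[X], l ≠ 0 ∧ b₀.Monic ∧ b₀.natDegree = b.natDegree ∧ b₀.coeff 0 = 0 ∧
      b = (aff l m).comp b₀ := by
  have hl : b.leadingCoeff ≠ 0 := leadingCoeff_ne_zero.2 (by rintro rfl; simp at hb)
  refine ⟨b.leadingCoeff, b.coeff 0, C b.leadingCoeff⁻¹ * (b - C (b.coeff 0)), hl, ?_, ?_, ?_, ?_⟩
  · rw [Monic, leadingCoeff_mul, leadingCoeff_C, leadingCoeff_sub_of_degree_lt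
      (degree_C_le.trans_lt (natDegree_pos_iff_degree_pos.1 hb)), inv_mul_cancel₀ hl]
  · rw [natDegree_C_mul (inv_ne_zero hl), natDegree_sub_C]
  · simp
  · rw [aff_comp, ← mul_assoc, ← C_mul, mul_inv_cancel₀ hl, C_1, one_mul, sub_add_cancel]

-- The relation `P ∼ Q` of the paper, for polynomials.
def AffEquiv (P Q : K[X]) : Prop :=
  ∃ a b c e : K, a ≠ 0 ∧ c ≠ 0 ∧ P = (aff c e).comp (Q.comp (aff a b))

def AffConj (P Q : K[X]) : Prop :=
  ∃ a b : K, a ≠ 0 ∧ (aff a b).comp P = Q.comp (aff a b)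

-- `P.comp^[n] X` is the `n`-th compositional iterate of `P`.
def StronglyEquiv (P Q : K[X]) : Prop :=
  ∀ n, 0 < n → AffEquiv (P.comp^[n] X) (Q.comp^[n] X)

lemma AffEquiv.trans {P Q R : K[X]} (hPQ : AffEquiv P Q) (hQR : AffEquiv Q R) :
    AffEquiv P R := by
  obtain ⟨a, b, c, e, ha, hc, rfl⟩ := hPQ
  obtain ⟨a', b', c', e', ha', hc', rfl⟩ := hQR
  refine ⟨a' * a, a' * b + b', c * c', c * e' + e, mul_ne_zero ha' ha, mul_ne_zero hc hc', ?_⟩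
  simp only [← aff_comp_aff, comp_assoc]

lemma AffConj.symm {P Q : K[X]} (h : AffConj P Q) : AffConj Q P := by
  obtain ⟨a, b, ha, h⟩ := h
  refine ⟨a⁻¹, -(a⁻¹ * b), inv_ne_zero ha, ?_⟩
  rw [aff_comp_eq_iff ha] at h
  rw [h, ← comp_assoc, comp_assoc _ (aff a b), aff_comp_aff_inv b ha, comp_X]

lemma AffConj.trans {P Q R : K[X]} (hPQ : AffConj P Q) (hQR : AffConj Q R) : AffConj P R := by
  obtain ⟨a, b, ha, h⟩ := hPQ
  obtain ⟨a', b', ha', h'⟩ := hQR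
  refine ⟨a' * a, a' * b + b', mul_ne_zero ha' ha, ?_⟩
  rw [← aff_comp_aff, comp_assoc, h, ← comp_assoc, h', comp_assoc]

lemma AffConj.iterate {P Q : K[X]} (h : AffConj P Q) (n : ℕ) :
    AffConj (P.comp^[n] X) (Q.comp^[n] X) := by
  obtain ⟨a, b, ha, h⟩ := h
  refine ⟨a, b, ha, ?_⟩
  induction n with
  | zero => simp
  | succ n ih =>
    rw [Function.iterate_succ_apply', Function.iterate_succ_apply', ← comp_assoc, h, comp_assoc,
      ih, comp_assoc]

lemma AffConj.affEquiv {P Q : K[X]} (h : AffConj P Q) : AffEquiv Q P := by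
  obtain ⟨a, b, ha, h⟩ := h
  exact ⟨a⁻¹, -(a⁻¹ * b), a, b, inv_ne_zero ha, ha, by rw [← comp_assoc, h,
    comp_assoc, aff_comp_aff_inv b ha, comp_X]⟩

lemma StronglyEquiv.trans {P Q R : K[X]} (hPQ : StronglyEquiv P Q) (hQR : StronglyEquiv Q R) :
    StronglyEquiv P R :=
  fun n hn => (hPQ n hn).trans (hQR n hn)

lemma AffConj.stronglyEquiv {P Q : K[X]} (h : AffConj P Q) : StronglyEquiv Q P :=
  fun n _ => (h.iterate n).affEquiv

end Field

section CharZero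

variable {K : Type*} [Field K] [CharZero K]

lemma natDegree_leadingCoeff_geom_sum₂ {b d : K[X]} (hb : b.Monic) (hd : d.Monic)
    (hbd : b.natDegree = d.natDegree) {n : ℕ} (hn : 0 < n) :
    (∑ i ∈ Finset.range n, b ^ i * d ^ (n - 1 - i)).natDegree = (n - 1) * b.natDegree ∧
      (∑ i ∈ Finset.range n, b ^ i * d ^ (n - 1 - i)).leadingCoeff = n := by
  have hterm : ∀ i ∈ Finset.range n, (b ^ i * d ^ (n - 1 - i)).Monic ∧
      (b ^ i * d ^ (n - 1 - i)).natDegree = (n - 1) * b.natDegree := by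
    intro i hi
    have hi : i < n := Finset.mem_range.1 hi
    refine ⟨(hb.pow i).mul (hd.pow _), ?_⟩
    rw [(hb.pow i).natDegree_mul (hd.pow _), hb.natDegree_pow, hd.natDegree_pow, ← hbd,
      ← add_mul]
    congr 1; omega
  have hcoeff : (∑ i ∈ Finset.range n, b ^ i * d ^ (n - 1 - i)).coeff ((n - 1) * b.natDegree)
      = n := by
    have h1 : ∀ i ∈ Finset.range n, (b ^ i * d ^ (n - 1 - i)).coeff ((n - 1) * b.natDegree) = 1 :=
      fun i hi => (hterm i hi).2 ▸ (hterm i hi).1.coeff_natDegree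
    rw [finsetSum_coeff, Finset.sum_congr rfl h1]
    simp
  have hdeg : (∑ i ∈ Finset.range n, b ^ i * d ^ (n - 1 - i)).natDegree = (n - 1) * b.natDegree :=
    le_antisymm (natDegree_sum_le_of_forall_le _ _ fun i hi => (hterm i hi).2.le)
      (le_natDegree_of_ne_zero (by rw [hcoeff]; exact_mod_cast hn.ne'))
  exact ⟨hdeg, by rw [leadingCoeff, hdeg, hcoeff]⟩

lemma natDegree_pow_sub_pow {b d : K[X]} (hb : b.Monic) (hd : d.Monic)
    (hbd : b.natDegree = d.natDegree) (hne : b ≠ d) {n : ℕ} (hn : 0 < n) :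
    (b ^ n - d ^ n).natDegree = (n - 1) * b.natDegree + (b - d).natDegree := by
  obtain ⟨hdeg, hlead⟩ := natDegree_leadingCoeff_geom_sum₂ hb hd hbd hn
  have hS : ∑ i ∈ Finset.range n, b ^ i * d ^ (n - 1 - i) ≠ 0 := by
    intro h0
    rw [h0, leadingCoeff_zero] at hlead
    exact hn.ne' (by exact_mod_cast hlead.symm)
  rw [← geom_sum₂_mul, natDegree_mul hS (sub_ne_zero.2 hne), hdeg]

lemma eq_of_comp_eq_comp_of_monic {a b c d : K[X]} (ha : 0 < a.natDegree) (hb : b.Monic)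
    (hd : d.Monic) (hbd : b.natDegree = d.natDegree) (hb0 : b.coeff 0 = 0)
    (hd0 : d.coeff 0 = 0) (h : a.comp b = c.comp d) : b = d ∧ a = c := by
  have hE : 0 < b.natDegree := by
    refine Nat.pos_of_ne_zero fun h0 => ?_
    rw [hb.natDegree_eq_zero.1 h0, coeff_one_zero] at hb0
    exact one_ne_zero hb0
  have hac : a.natDegree = c.natDegree := by
    have := congrArg natDegree h
    rw [natDegree_comp, natDegree_comp, ← hbd] at this
    exact Nat.eq_of_mul_eq_mul_right hE this
  have hlead : a.leadingCoeff = c.leadingCoeff := by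
    have := congrArg leadingCoeff h
    rwa [leadingCoeff_comp hE.ne', leadingCoeff_comp (hbd ▸ hE.ne'), hb.leadingCoeff,
      hd.leadingCoeff, one_pow, one_pow, mul_one, mul_one] at this
  -- With `D = deg a`, `E = deg b`: `lc a * (b ^ D - d ^ D)` is a difference of lower-order
  -- terms, of degree `≤ (D - 1) * E`, while `b ^ D - d ^ D` has degree `(D - 1) * E + deg (b - d)`.
  have hbd' : b = d := by
    by_contra hne
    have hkey : C a.leadingCoeff * (b ^ a.natDegree - d ^ a.natDegree)
        = c.eraseLead.comp d - a.eraseLead.comp b := by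
      rw [comp_eq_eraseLead_comp_add a b, comp_eq_eraseLead_comp_add c d, ← hac, ← hlead] at h
      linear_combination h
    have hle : (C a.leadingCoeff * (b ^ a.natDegree - d ^ a.natDegree)).natDegree
        ≤ (a.natDegree - 1) * b.natDegree := by
      rw [hkey]
      refine (natDegree_sub_le _ _).trans (max_le ?_ (natDegree_eraseLead_comp_le a b))
      rw [hac, hbd]; exact natDegree_eraseLead_comp_le c d
    have ha0 : a.leadingCoeff ≠ 0 := leadingCoeff_ne_zero.2 (by rintro rfl; simp at ha)
    rw [natDegree_C_mul ha0, natDegree_pow_sub_pow hb hd hbd hne ha] at hle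
    have hconst := eq_C_of_natDegree_eq_zero (by omega : (b - d).natDegree = 0)
    rw [coeff_sub, hb0, hd0, sub_zero, C_0, sub_eq_zero] at hconst
    exact hne hconst
  refine ⟨hbd', ?_⟩
  have h0 : (a - c).comp b = 0 := by rw [sub_comp, h, hbd', sub_self]
  rcases comp_eq_zero_iff.1 h0 with h1 | ⟨-, h2⟩
  · exact sub_eq_zero.1 h1
  · rw [h2, natDegree_C] at hE; exact absurd hE (lt_irrefl 0)

theorem exists_aff_of_comp_eq_comp {a b c d : K[X]} (ha : 0 < a.natDegree) (hb : 0 < b.natDegree)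
    (hbd : b.natDegree = d.natDegree) (h : a.comp b = c.comp d) :
    ∃ l m : K, l ≠ 0 ∧ c = a.comp (aff l m) ∧ b = (aff l m).comp d := by
  obtain ⟨l, m, b₀, hl, hb₀, hb₀d, hb₀0, rfl⟩ := exists_aff_comp_monic hb
  obtain ⟨l', m', d₀, hl', hd₀, hd₀d, hd₀0, rfl⟩ := exists_aff_comp_monic (hbd ▸ hb)
  simp only [← comp_assoc] at h
  obtain ⟨rfl, hac⟩ := eq_of_comp_eq_comp_of_monic
    (by rwa [natDegree_comp, natDegree_aff m hl, mul_one]) hb₀ hd₀ (by rw [hb₀d, hd₀d, hbd]) hb₀0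
    hd₀0 h
  replace hac := (comp_aff_eq_iff hl').1 hac.symm
  refine ⟨l * l'⁻¹, l * -(l'⁻¹ * m') + m, mul_ne_zero hl (inv_ne_zero hl'), ?_, ?_⟩
  · rw [hac, comp_assoc, aff_comp_aff]
  · rw [← aff_comp_aff, comp_assoc, ← comp_assoc _ _ b₀, aff_inv_comp_aff m' hl', X_comp]

lemma coeff_eq_of_aff_comp_eq_comp_aff {F G : K[X]} {d : ℕ} (hd : 2 ≤ d)
    (hF : F.coeff (d - 1) = 0) (hGd : G.natDegree = d) (hG : G.coeff (d - 1) = 0)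
    {γ δ l m : K} (hl : l ≠ 0) (h : (aff γ δ).comp F = G.comp (aff l m)) :
    m = 0 ∧ (∀ k ≠ 0, γ * F.coeff k = G.coeff k * l ^ k) ∧ γ * F.coeff 0 + δ = G.coeff 0 := by
  have hcoeff : ∀ k, γ * F.coeff k + (if k = 0 then δ else 0) = (taylor m G).coeff k * l ^ k := by
    intro k
    rw [← coeff_comp_aff, ← h, aff_comp, coeff_add, coeff_C_mul, coeff_C]
  have hG0 : G ≠ 0 := by rintro rfl; simp at hGd; omega
  -- In degree `d - 1` the left side vanishes and the right side is `d * lc G * l ^ (d - 1) * m`.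
  have hm : m = 0 := by
    have h1 := hcoeff (d - 1)
    rw [hF, if_neg (by omega), ← hGd, coeff_taylor_natDegree_sub_one _ _ (by omega), hGd, hG]
      at h1
    have : (d : K) * G.leadingCoeff * l ^ (d - 1) ≠ 0 := by
      have : (d : K) ≠ 0 := by exact_mod_cast (by omega : d ≠ 0)
      exact mul_ne_zero (mul_ne_zero this (leadingCoeff_ne_zero.2 hG0)) (pow_ne_zero _ hl)
    exact (mul_eq_zero.1 (by linear_combination -h1 : _ * m = 0)).resolve_left this
  subst hm
  refine ⟨rfl, fun k hk => ?_, ?_⟩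
  · simpa [hk] using hcoeff k
  · simpa using hcoeff 0

theorem exists_affConj_comp_aff_of_affEquiv {P Q : K[X]} {d : ℕ} (hd : 2 ≤ d)
    (hPd : P.natDegree = d) (hPm : P.Monic) (hPc : P.coeff (d - 1) = 0) (hQd : Q.natDegree = d)
    (h : AffEquiv (P.comp P) (Q.comp Q)) :
    ∃ w : K, w ≠ 0 ∧ AffConj Q (P.comp (aff w 0)) ∧
      ∀ k, 0 < k → P.coeff k ≠ 0 → w ^ (d - k) = 1 := by
  obtain ⟨a, b, c, e, ha, hc, h⟩ := h
  replace h : P.comp P = ((aff c e).comp Q).comp (Q.comp (aff a b)) := by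
    rw [h]; simp only [comp_assoc]
  obtain ⟨l, m, hl, hQ, hP⟩ := exists_aff_of_comp_eq_comp (by omega) (by omega)
    (by rw [natDegree_comp, hQd, natDegree_aff b ha, mul_one, hPd]) h
  -- With `B = aff a b` and `L = aff l m`: `L ∘ Q = P ∘ B⁻¹` and `(aff c e) ∘ Q = P ∘ L` give
  -- `M ∘ P = P ∘ (L ∘ B)`, and centredness makes `L ∘ B` the scaling by `l * a`.
  have hLQ : (aff l m).comp Q = P.comp (aff a⁻¹ (-(a⁻¹ * b))) := by
    rw [← comp_aff_eq_iff ha, comp_assoc, ← hP]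
  have hMP : (aff (c * l⁻¹) (c * -(l⁻¹ * m) + e)).comp P = P.comp (aff (l * a) (l * b + m)) := by
    rw [← aff_comp_aff, ← aff_comp_aff, comp_assoc, ← (aff_comp_eq_iff hl).1 hP.symm,
      ← comp_assoc, hQ, comp_assoc]
  obtain ⟨hm, hcoeff, -⟩ :=
    coeff_eq_of_aff_comp_eq_comp_aff hd hPc hPd hPc (mul_ne_zero hl ha) hMP
  obtain rfl : m = -(l * b) := by linear_combination hm
  have hv0 : l * a ≠ 0 := mul_ne_zero hl ha
  refine ⟨(l * a)⁻¹, inv_ne_zero hv0, ⟨l, -(l * b), hl, ?_⟩, fun k hk hPk => ?_⟩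
  · rw [hLQ, comp_assoc, aff_comp_aff]
    congr 2
    · field_simp
    · field_simp; ring
  · have hkd : k ≤ d := by
      by_contra! hkd
      exact hPk (coeff_eq_zero_of_natDegree_lt (hPd ▸ hkd))
    have hvk : (l * a) ^ k * (l * a) ^ (d - k) = (l * a) ^ k := by
      rw [← pow_add, Nat.add_sub_cancel' hkd]
      have h1 := hcoeff d (by omega)
      have h2 := hcoeff k hk.ne'
      rw [show P.coeff d = 1 from hPd ▸ hPm.coeff_natDegree, mul_one, one_mul] at h1
      rw [h1] at h2
      exact mul_left_cancel₀ hPk (by linear_combination h2)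
    rw [inv_pow, mul_eq_left₀ (pow_ne_zero _ hv0) |>.1 hvk, inv_one]

lemma aff_comp_unicritical_eq_comp_aff {d : ℕ} (hd : 2 ≤ d) {u v c c' γ δ l m : K}
    (hv : v ≠ 0) (hl : l ≠ 0)
    (h : (aff γ δ).comp (C u * X ^ d + C c) = (C v * X ^ d + C c').comp (aff l m)) :
    m = 0 ∧ γ * u = v * l ^ d ∧ γ * c + δ = c' := by
  obtain ⟨hm, hcoeff, hconst⟩ := coeff_eq_of_aff_comp_eq_comp_aff hd
    (coeff_unicritical u c (by omega) (by omega)) (natDegree_unicritical c' hv)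
    (coeff_unicritical v c' (by omega) (by omega)) hl h
  have hd0 : d ≠ 0 := by omega
  refine ⟨hm, by simpa [coeff_C, hd0] using hcoeff d hd0, ?_⟩
  rwa [coeff_zero_unicritical u c hd0, coeff_zero_unicritical v c' hd0] at hconst

theorem eq_of_affEquiv_comp_comp {d : ℕ} (hd : 2 ≤ d) {c u v : K} (hc : c ≠ 0) (hu : u ≠ 0)
    (hv : v ≠ 0)
    (h : AffEquiv ((C v * X ^ d + C c).comp ((C v * X ^ d + C c).comp (C v * X ^ d + C c)))
      ((C u * X ^ d + C c).comp ((C u * X ^ d + C c).comp (C u * X ^ d + C c)))) :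
    v = u := by
  set S := C v * X ^ d + C c
  set T := C u * X ^ d + C c
  have hSd : S.natDegree = d := natDegree_unicritical c hv
  have hTd : T.natDegree = d := natDegree_unicritical c hu
  obtain ⟨a, b, γ, δ, ha, hγ, h⟩ := h
  -- Splitting `S ∘ S ∘ S` twice gives `A ∘ T = S ∘ L₁`, `L₁ ∘ T = S ∘ L₂` and
  -- `L₂⁻¹ ∘ S = T ∘ B`; the constant terms then force `L₁ = L₂ = id`.
  replace h : S.comp (S.comp S) = ((aff γ δ).comp T).comp ((T.comp T).comp (aff a b)) := by
    rw [h]; simp only [comp_assoc]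
  obtain ⟨l₁, m₁, hl₁, h₁, h₁'⟩ := exists_aff_of_comp_eq_comp (by omega)
    (by rw [natDegree_comp, hSd]; positivity)
    (by rw [natDegree_comp, natDegree_comp, natDegree_comp, hSd, hTd, natDegree_aff b ha, mul_one])
    h
  replace h₁' : S.comp S = ((aff l₁ m₁).comp T).comp (T.comp (aff a b)) := by
    rw [h₁']; simp only [comp_assoc]
  obtain ⟨l₂, m₂, hl₂, h₂, h₂'⟩ := exists_aff_of_comp_eq_comp (by omega) (by omega)
    (by rw [natDegree_comp, hSd, hTd, natDegree_aff b ha, mul_one]) h₁'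
  have h₃ := ((aff_comp_eq_iff hl₂).1 h₂'.symm).symm
  obtain ⟨rfl, -, -⟩ := aff_comp_unicritical_eq_comp_aff hd hv hl₁ h₁
  obtain ⟨rfl, hlead, hl₁c⟩ := aff_comp_unicritical_eq_comp_aff hd hv hl₂ h₂
  obtain ⟨-, -, hl₂c⟩ := aff_comp_unicritical_eq_comp_aff hd hu ha h₃
  have hl₁1 : l₁ = 1 := mul_right_cancel₀ hc (by rw [← add_zero (l₁ * c), hl₁c, one_mul])
  have hl₂1 : l₂ = 1 := by
    rw [mul_zero, neg_zero, add_zero] at hl₂c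
    exact inv_eq_one.1 (mul_right_cancel₀ hc (by rw [hl₂c, one_mul]))
  simpa [hl₁1, hl₂1] using hlead.symm

end CharZero

section IsAlgClosed

variable {K : Type*} [Field K] [IsAlgClosed K]

lemma affConj_C_mul_X_pow {d : ℕ} (hd : 2 ≤ d) {u : K} (hu : u ≠ 0) :
    AffConj (C u * X ^ d) (X ^ d) := by
  obtain ⟨r, hr⟩ := IsAlgClosed.exists_pow_nat_eq u (by omega : 0 < d - 1)
  have hr0 : r ≠ 0 := by rintro rfl; exact hu (by rw [← hr, zero_pow (by omega)])
  refine ⟨r, 0, hr0, ?_⟩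
  rw [aff_comp, X_pow_comp, aff, C_0, add_zero, add_zero, mul_pow, ← C_pow, ← mul_assoc, ← C_mul,
    ← hr, ← pow_succ', Nat.sub_add_cancel (by omega)]

variable [CharZero K]

theorem exists_affConj_monic_centered {p : K[X]} {d : ℕ} (hd : 2 ≤ d) (hp : p.natDegree = d) :
    ∃ P : K[X], AffConj p P ∧ P.natDegree = d ∧ P.Monic ∧ P.coeff (d - 1) = 0 := by
  have hlead : p.leadingCoeff ≠ 0 := leadingCoeff_ne_zero.2 (by rintro rfl; simp at hp; omega)
  obtain ⟨t, ht⟩ := IsAlgClosed.exists_pow_nat_eq p.leadingCoeff⁻¹ (by omega : 0 < d - 1)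
  have ht0 : t ≠ 0 := by rintro rfl; exact inv_ne_zero hlead (by rw [← ht, zero_pow (by omega)])
  -- `t ^ (d - 1) = lc⁻¹` makes `P` monic and the translation `s` kills its `z ^ (d - 1)` term.
  set s := -(p.coeff (d - 1) / (d * p.leadingCoeff))
  set P := (aff t⁻¹ (-(t⁻¹ * s))).comp (p.comp (aff t s))
  have hcoeff : ∀ k ≠ 0, P.coeff k = t⁻¹ * ((taylor s p).coeff k * t ^ k) := fun k hk => by
    simp [P, aff_comp, coeff_comp_aff, coeff_C, hk]
  have htd : t ^ d = t * p.leadingCoeff⁻¹ := by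
    rw [← ht, ← pow_succ']; congr 1; omega
  have hPd : P.natDegree = d := by
    rw [natDegree_comp, natDegree_aff _ (inv_ne_zero ht0), natDegree_comp, natDegree_aff s ht0,
      hp, one_mul, mul_one]
  refine ⟨P, AffConj.symm ⟨t, s, ht0, (aff_comp_eq_iff ht0).2 rfl⟩, hPd, ?_, ?_⟩
  · rw [Monic, leadingCoeff, hPd, hcoeff _ (by omega), ← hp, coeff_taylor_natDegree, hp, htd]
    field_simp
  · have hs : d * p.leadingCoeff * s = -p.coeff (d - 1) := by
      have : (d : K) ≠ 0 := by exact_mod_cast (by omega : d ≠ 0)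
      simp only [s]; field_simp
    rw [hcoeff _ (by omega), ← hp, coeff_taylor_natDegree_sub_one _ _ (by omega), hp, hs,
      add_neg_cancel, zero_mul, mul_zero]

theorem exists_pow_eq_one_of_stronglyEquiv {P : K[X]} {d : ℕ} (hd : 2 ≤ d)
    (hPd : P.natDegree = d) (hPm : P.Monic) (hPc : P.coeff (d - 1) = 0) :
    ∃ N, 0 < N ∧ ∀ Q : K[X], Q.natDegree = d → StronglyEquiv P Q →
      ∃ w : K, w ^ N = 1 ∧ AffConj Q (P.comp (aff w 0)) := by
  have key := fun Q (hQd : Q.natDegree = d) (hPQ : StronglyEquiv P Q) =>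
    exists_affConj_comp_aff_of_affEquiv hd hPd hPm hPc hQd (by simpa using hPQ 2 two_pos)
  by_cases hmid : ∃ k, 0 < k ∧ k < d - 1 ∧ P.coeff k ≠ 0
  · obtain ⟨k, hk, hkd, hPk⟩ := hmid
    refine ⟨d - k, by omega, fun Q hQd hPQ => ?_⟩
    obtain ⟨w, -, hQw, hroot⟩ := key Q hQd hPQ
    exact ⟨w, hroot k hk hPk, hQw⟩
  push Not at hmid
  have hP := eq_X_pow_add_C_of_coeff_eq_zero (by omega) hPd hPm fun k hk hkd => by
    rcases (by omega : k < d - 1 ∨ k = d - 1) with hkd | rfl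
    exacts [hmid k hk hkd, hPc]
  set c := P.coeff 0
  refine ⟨d, by omega, fun Q hQd hPQ => ?_⟩
  obtain ⟨w, hw, hQw, -⟩ := key Q hQd hPQ
  have hPw : P.comp (aff w 0) = C (w ^ d) * X ^ d + C c := by
    rw [hP, add_comp, X_pow_comp, C_comp, aff, C_0, add_zero, mul_pow, C_pow]
  by_cases hc : c = 0
  · refine ⟨1, one_pow d, hQw.trans ?_⟩
    rw [hPw, hc, C_0, add_zero, show aff (1 : K) 0 = X by simp [aff], comp_X, hP, hc, C_0, add_zero]
    exact affConj_C_mul_X_pow hd (pow_ne_zero d hw)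
  refine ⟨w, ?_, hQw⟩
  have h3 := (hPQ.trans (hPw ▸ hQw).symm.stronglyEquiv) 3 (by norm_num)
  simp only [Function.iterate_succ_apply', Function.iterate_zero_apply, comp_X] at h3
  rw [show P = C 1 * X ^ d + C c by rw [C_1, one_mul]; exact hP] at h3
  exact (eq_of_affEquiv_comp_comp hd hc (pow_ne_zero d hw) one_ne_zero h3).symm

end IsAlgClosed

lemma stronglyEquiv_of_simAffine_iterate {p q : ℂ[X]}
    (h : ∀ n, 1 ≤ n → simAffine ((fun z => p.eval z)^[n]) ((fun z => q.eval z)^[n])) :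
    StronglyEquiv p q := by
  intro n hn
  obtain ⟨a, b, c, e, ha, hc, h⟩ := h n hn
  exact ⟨a, b, c, e, ha, hc, Polynomial.funext fun z => by simpa [eval_comp] using h z⟩

/-- Each strong equivalence class (i.e. `f^n ∼ g^n` for all `n ≥ 1`)
consists of finitely many affine conjugacy classes: there are finitely many degree `d`
polynomials `g₁,…,g_m` such that every degree `d` polynomial strongly equivalent to `f`
is affinely conjugate to some `gᵢ`. -/
theorem stmt9 (d : ℕ) (hd : 2 ≤ d) (p : Polynomial ℂ) (hp : p.natDegree = d) :
    ∃ (m : ℕ) (gs : Fin m → Polynomial ℂ),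
      (∀ i, (gs i).natDegree = d) ∧
      ∀ q : Polynomial ℂ, q.natDegree = d →
        (∀ n : ℕ, 1 ≤ n →
          simAffine ((fun z => p.eval z)^[n]) ((fun z => q.eval z)^[n])) →
        ∃ (i : Fin m) (a b : ℂ), a ≠ 0 ∧
          ∀ z : ℂ, a * q.eval z + b = (gs i).eval (a * z + b) := by
  obtain ⟨P, hpP, hPd, hPm, hPc⟩ := exists_affConj_monic_centered hd hp
  obtain ⟨N, hN, hclasses⟩ := exists_pow_eq_one_of_stronglyEquiv hd hPd hPm hPc
  let roots := nthRootsFinset N (1 : ℂ)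
  have hroot : ∀ w : roots, (w : ℂ) ^ N = 1 := fun w => (mem_nthRootsFinset hN 1).1 w.2
  refine ⟨roots.card, fun i => P.comp (aff (roots.equivFin.symm i) 0), fun i => ?_,
    fun q hqd hpq => ?_⟩
  · have hw : (roots.equivFin.symm i : ℂ) ≠ 0 := fun h0 => by
      simpa [h0, zero_pow hN.ne'] using hroot (roots.equivFin.symm i)
    rw [natDegree_comp, natDegree_aff _ hw, hPd, mul_one]
  obtain ⟨w, hw, a, b, ha, hconj⟩ :=
    hclasses q hqd (hpP.stronglyEquiv.trans (stronglyEquiv_of_simAffine_iterate hpq))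
  refine ⟨roots.equivFin ⟨w, (mem_nthRootsFinset hN 1).2 hw⟩, a, b, ha, fun z => ?_⟩
  simpa [eval_comp] using congrArg (eval z) hconj
end

section
/- Let f be a complex polynomial of degree d ≥ 2 and let z₁ ∈ ℂ be a fixed point of f (f(z₁) = z₁) with f'(z₁) ≠ 0 and |f'(z₁)| ≤ 1 (an attracting or parabolic non-critical fixed point). Let z ∈ ℂ with z ∉ Precrit(f) and f^n(z) → z₁ as n → ∞. Then lim_{n→∞} S_{f^n}(z)/d^{2n} = 0. -/
/-!
By the chain rule for the Schwarzian, `S_{f^n}(z) = ∑_{k<n} S_f(f^k z) · ((f^k)'(z))²`, every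
term being defined because `z` is not precritical. Along the orbit `S_f(f^k z) → S_f(z₁)`, which
is finite as `f'(z₁) ≠ 0`, and eventually `|f'(f^k z)| ≤ 3/2`, so `(f^k)'(z) = O((3/2)^k)`.
Hence `S_{f^n}(z) = O((9/4)^n)`, which is `o(d^{2n})` since `d ≥ 2`.
-/

open Filter Topology MeasureTheory Set

open Asymptotics Finset

namespace Polynomial
variable {K : Type*} [Field K]

noncomputable def schwarzian (q : K[X]) (w : K) : K :=
  (derivative^[3] q).eval w / (derivative q).eval w
    - 3 / 2 * ((derivative^[2] q).eval w / (derivative q).eval w) ^ 2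

theorem schwarzian_comp [NeZero (2 : K)] (q r : K[X]) (w : K)
    (hr : (derivative r).eval w ≠ 0) (hq : (derivative q).eval (r.eval w) ≠ 0) :
    (q.comp r).schwarzian w =
      q.schwarzian (r.eval w) * (derivative r).eval w ^ 2 + r.schwarzian w := by
  simp only [schwarzian, Function.iterate_succ_apply', Function.iterate_zero_apply,
    derivative_comp, derivative_mul, derivative_add, eval_mul, eval_add, eval_comp]
  field_simp
  ring

theorem derivative_iterate_comp_succ_eval (p : K[X]) (k : ℕ) (z : K) :
    (derivative (p.comp^[k + 1] X)).eval z =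
      (derivative (p.comp^[k] X)).eval z * (derivative p).eval ((p.comp^[k] X).eval z) := by
  rw [Function.iterate_succ_apply', derivative_comp, eval_mul, eval_comp]

theorem schwarzian_X (z : K) : (X : K[X]).schwarzian z = 0 := by
  simp [schwarzian]

theorem schwarzian_iterate_comp [NeZero (2 : K)] (p : K[X]) (z : K) (n : ℕ)
    (hD : ∀ k ≤ n, (derivative (p.comp^[k] X)).eval z ≠ 0) :
    (p.comp^[n] X).schwarzian z = ∑ k ∈ range n,
      p.schwarzian ((p.comp^[k] X).eval z) * (derivative (p.comp^[k] X)).eval z ^ 2 := by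
  induction n with
  | zero => exact schwarzian_X z
  | succ n ih =>
    have hp : (derivative p).eval ((p.comp^[n] X).eval z) ≠ 0 := by
      have := hD (n + 1) le_rfl
      rw [derivative_iterate_comp_succ_eval] at this
      exact right_ne_zero_of_mul this
    rw [Function.iterate_succ_apply', schwarzian_comp _ _ _ (hD n n.le_succ) hp,
      ih fun k hk => hD k (hk.trans n.le_succ), sum_range_succ, add_comm]

variable {𝕜 : Type*} [NontriviallyNormedField 𝕜]

theorem iteratedDeriv_eval (q : 𝕜[X]) (n : ℕ) :
    iteratedDeriv n (fun x => q.eval x) = fun x => (derivative^[n] q).eval x := by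
  induction n with
  | zero => simp
  | succ n ih =>
    ext x
    rw [iteratedDeriv_succ, ih, Function.iterate_succ_apply', Polynomial.deriv]

theorem continuousAt_schwarzian (q : 𝕜[X]) {w : 𝕜} (hw : (derivative q).eval w ≠ 0) :
    ContinuousAt q.schwarzian w := by
  unfold schwarzian
  fun_prop (disch := exact hw)

theorem schwarzian_eval (q : ℂ[X]) (w : ℂ) :
    _root_.schwarzian (fun x => q.eval x) w = q.schwarzian w := by
  simp only [_root_.schwarzian, schwarzian, iteratedDeriv_eval, Polynomial.deriv]

end Polynomial

namespace Asymptotics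

theorem isBigO_pow_of_eventually_norm_le {R : Type*} [SeminormedRing R] {D c : ℕ → R} {ρ : ℝ}
    (hρ : 0 < ρ) (hD : ∀ k, D (k + 1) = D k * c k) (hc : ∀ᶠ k in atTop, ‖c k‖ ≤ ρ) :
    D =O[atTop] fun k => ρ ^ k := by
  obtain ⟨N, hN⟩ := eventually_atTop.mp hc
  have hgrowth : ∀ m, ‖D (N + m)‖ ≤ ‖D N‖ * ρ ^ m := by
    intro m
    induction m with
    | zero => simp
    | succ m ih =>
      calc ‖D (N + (m + 1))‖ ≤ ‖D (N + m)‖ * ‖c (N + m)‖ := by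
            rw [← add_assoc, hD]; exact norm_mul_le _ _
        _ ≤ ‖D N‖ * ρ ^ m * ρ := by
            gcongr
            exact hN _ (N.le_add_right m)
        _ = ‖D N‖ * ρ ^ (m + 1) := by ring
  refine IsBigO.of_bound (‖D N‖ / ρ ^ N) (eventually_atTop.mpr ⟨N, fun k hk => ?_⟩)
  obtain ⟨m, rfl⟩ := Nat.exists_eq_add_of_le hk
  rw [Real.norm_of_nonneg (by positivity), pow_add, ← mul_assoc,
    div_mul_cancel₀ _ (by positivity)]
  exact hgrowth m

theorem isBigO_sum_range_pow {E : Type*} [SeminormedAddCommGroup E] {f : ℕ → E} {r : ℝ}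
    (hr : 1 < r) (h : f =O[atTop] fun n => r ^ n) :
    (fun n => ∑ i ∈ range n, f i) =O[atTop] fun n => r ^ n := by
  obtain ⟨C, hC, hf⟩ := bound_of_isBigO_nat_atTop h
  have hf' : ∀ i, ‖f i‖ ≤ C * r ^ i := fun i => by
    simpa [abs_of_pos (by positivity : 0 < r)] using hf (pow_ne_zero i (by positivity))
  refine IsBigO.of_bound (C / (r - 1)) (Eventually.of_forall fun n => ?_)
  have hr1 : 0 < r - 1 := sub_pos.mpr hr
  calc ‖∑ i ∈ range n, f i‖ ≤ ∑ i ∈ range n, C * r ^ i :=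
        norm_sum_le_of_le _ fun i _ => hf' i
    _ = C / (r - 1) * (r ^ n - 1) := by rw [← mul_sum, geom_sum_eq hr.ne']; ring
    _ ≤ C / (r - 1) * ‖r ^ n‖ := by
      rw [Real.norm_of_nonneg (by positivity)]
      gcongr
      linarith

theorem IsBigO.tendsto_div_pow {𝕜 : Type*} [NormedField 𝕜] {s : ℕ → 𝕜} {r : ℝ}
    {c : 𝕜} (h : s =O[atTop] fun n => r ^ n) (hrc : |r| < ‖c‖) :
    Tendsto (fun n => s n / c ^ n) atTop (𝓝 0) := by
  have hc : 0 < ‖c‖ := (abs_nonneg r).trans_lt hrc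
  have hlim : Tendsto (fun n => (r / ‖c‖) ^ n) atTop (𝓝 0) :=
    tendsto_pow_atTop_nhds_zero_of_abs_lt_one (by rwa [abs_div, abs_norm, div_lt_one hc])
  refine IsBigO.trans_tendsto ?_ hlim
  have hinv : (fun n => (c ^ n)⁻¹) =O[atTop] fun n => (‖c‖ ^ n)⁻¹ :=
    isBigO_of_le _ fun n => by simp
  simpa only [div_eq_mul_inv, mul_pow, inv_pow] using h.mul hinv

end Asymptotics

theorem stmt16_general (d : ℕ) (hd : 2 ≤ d) (p : Polynomial ℂ)
    (f : ℂ → ℂ) (hf : ∀ z, f z = p.eval z)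
    (z₁ : ℂ) (hder : deriv f z₁ ≠ 0)
    (habs : ‖deriv f z₁‖ ≤ 1)
    (z : ℂ) (hz : z ∉ precrit f)
    (hattr : Tendsto (fun n : ℕ => f^[n] z) atTop (𝓝 z₁)) :
    Tendsto (fun n : ℕ => schwarzian (f^[n]) z / (d : ℂ) ^ (2 * n)) atTop (𝓝 0) := by
  obtain rfl : f = fun w => p.eval w := funext hf
  set Q : ℕ → Polynomial ℂ := fun n => p.comp^[n] Polynomial.X
  have hiter : ∀ n, (fun w => p.eval w)^[n] = fun w => (Q n).eval w := fun n => by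
    ext w; simp [Q]
  rw [Polynomial.deriv] at hder habs
  have hD : ∀ k, (Q k).derivative.eval z ≠ 0
    | 0 => by simp [Q]
    | k + 1 => fun h => hz ⟨k + 1, Nat.le_add_left 1 k, by rwa [hiter, Polynomial.deriv]⟩
  have horbit : Tendsto (fun k => (Q k).eval z) atTop (𝓝 z₁) := by simpa [hiter] using hattr
  have hS : (fun k => p.schwarzian ((Q k).eval z)) =O[atTop] fun _ => (1 : ℝ) :=
    ((p.continuousAt_schwarzian hder).tendsto.comp horbit).isBigO_one ℝ
  have hmult : ∀ᶠ k in atTop, ‖p.derivative.eval ((Q k).eval z)‖ ≤ 3 / 2 :=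
    ((p.derivative.continuous.tendsto z₁).comp horbit).norm.eventually_le_const
      (habs.trans_lt (by norm_num))
  have hQ' : (fun k => (Q k).derivative.eval z) =O[atTop] fun k => (3 / 2 : ℝ) ^ k :=
    isBigO_pow_of_eventually_norm_le (by norm_num)
      (p.derivative_iterate_comp_succ_eval · z) hmult
  have hsum : (fun n => (Q n).schwarzian z) =O[atTop] fun n => ((3 / 2 : ℝ) ^ 2) ^ n := by
    refine (isBigO_sum_range_pow (by norm_num) ?_).congr_left
      fun n => (p.schwarzian_iterate_comp z n fun k _ => hD k).symm
    exact (hS.mul (hQ'.pow 2)).congr_right fun k => by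
      rw [one_mul, ← pow_mul, ← pow_mul, mul_comm]
  simp_rw [hiter, Polynomial.schwarzian_eval, pow_mul]
  refine hsum.tendsto_div_pow ?_
  have hd' : (2 : ℝ) ≤ d := by exact_mod_cast hd
  rw [norm_pow, Complex.norm_natCast, abs_of_pos (by norm_num)]
  nlinarith

/-- If `z₁` is a non-critical fixed point of `f` with `|f'(z₁)| ≤ 1`
(attracting or parabolic), and `z ∉ Precrit(f)` is attracted to `z₁`, then
`S_{f^n}(z)/d^{2n} → 0`. -/
theorem stmt16 (d : ℕ) (hd : 2 ≤ d) (p : Polynomial ℂ) (hdeg : p.natDegree = d)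
    (f : ℂ → ℂ) (hf : ∀ z, f z = p.eval z)
    (z₁ : ℂ) (hfix : f z₁ = z₁) (hder : deriv f z₁ ≠ 0)
    (habs : ‖deriv f z₁‖ ≤ 1)
    (z : ℂ) (hz : z ∉ precrit f)
    (hattr : Tendsto (fun n : ℕ => f^[n] z) atTop (𝓝 z₁)) :
    Tendsto (fun n : ℕ => schwarzian (f^[n]) z / (d : ℂ) ^ (2 * n)) atTop (𝓝 0) :=
  stmt16_general d hd p f hf z₁ hder habs z hz hattr
end

section
/- Let f be a complex polynomial of degree d ≥ 2 admitting a Siegel disc: suppose U ⊆ ℂ is open with f(U) ⊆ U, ρ > 0, φ : U → B(0,ρ) is a holomorphic bijection onto the open disc B(0,ρ), and λ ∈ ℂ with |λ| = 1 satisfies φ(f(w)) = λ·φ(w) for all w ∈ U. Then for every z ∈ U with z ∉ Precrit(f), lim_{n→∞} S_{f^n}(z)/d^{2n} = 0. -/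
/-!
An injective holomorphic map has nowhere vanishing derivative, so `φ' ≠ 0` on `U`. Since
`‖φ ∘ f^[n]‖ = ‖φ‖` on `U`, the iterates map a small disc around `z` into the compact set
`φ⁻¹(closedBall 0 r) ⊆ U` for some `r < ρ`, and the orbit of `z` stays in `φ⁻¹(sphere 0 ‖φ z‖)`.
Hence the `f^[n]` are uniformly bounded near `z`, and the chain rule applied to
`φ ∘ f^[n] = λ ^ n • φ` bounds `‖(f^[n])' z‖` from below. Cauchy's estimates then bound the
Schwarzian derivatives `S_{f^[n]}(z)` uniformly in `n`, while `d ^ (2 n) → ∞`.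
-/

open Filter Topology MeasureTheory Set

open Function Metric

theorem Set.InjOn.not_eventually_eq {α β : Type*} [TopologicalSpace α] {φ : α → β} {U : Set α}
    {z : α} [(𝓝[≠] z).NeBot] (hinj : InjOn φ U) (hU : U ∈ 𝓝 z) :
    ¬∀ᶠ w in 𝓝 z, φ w = φ z := by
  intro h
  obtain ⟨w, ⟨hw, hwU⟩, hwz⟩ :=
    ((eventually_nhdsWithin_of_eventually_nhds (h.and hU)).and
      (eventually_mem_nhdsWithin (s := {z}ᶜ))).exists
  exact hwz (hinj hwU (mem_of_mem_nhds hU) hw)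

theorem Set.InjOn.continuousOn_invFunOn_image {α β : Type*} [TopologicalSpace α]
    [TopologicalSpace β] [Nonempty α] {φ : α → β} {U : Set α} (hinj : InjOn φ U) (hU : IsOpen U)
    (hopen : ∀ V ⊆ U, IsOpen V → IsOpen (φ '' V)) :
    ContinuousOn (invFunOn φ U) (φ '' U) := by
  refine continuousOn_iff'.2 fun t ht =>
    ⟨φ '' (t ∩ U), hopen _ inter_subset_right (ht.inter hU), ?_⟩
  ext y
  constructor
  · rintro ⟨hyt, w, hw, rfl⟩
    rw [mem_preimage, hinj.leftInvOn_invFunOn hw] at hyt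
    exact ⟨⟨w, ⟨hyt, hw⟩, rfl⟩, w, hw, rfl⟩
  · rintro ⟨⟨w, ⟨hwt, hw⟩, rfl⟩, -⟩
    exact ⟨by rwa [mem_preimage, hinj.leftInvOn_invFunOn hw], w, hw, rfl⟩

section InjectiveHolomorphic

variable {φ : ℂ → ℂ} {U : Set ℂ}

theorem AnalyticOnNhd.isOpen_image_of_injOn (hφ : AnalyticOnNhd ℂ φ U) (hinj : InjOn φ U)
    {V : Set ℂ} (hVU : V ⊆ U) (hV : IsOpen V) : IsOpen (φ '' V) := by
  refine isOpen_iff_mem_nhds.2 ?_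
  rintro _ ⟨w, hw, rfl⟩
  have hUw : U ∈ 𝓝 w := mem_of_superset (hV.mem_nhds hw) hVU
  exact ((hφ w (hVU hw)).eventually_constant_or_nhds_le_map_nhds.resolve_left
    (hinj.not_eventually_eq hUw)) (image_mem_map (hV.mem_nhds hw))

theorem DifferentiableOn.continuousOn_invFunOn_image (hU : IsOpen U)
    (hφ : DifferentiableOn ℂ φ U) (hinj : InjOn φ U) :
    ContinuousOn (invFunOn φ U) (φ '' U) :=
  hinj.continuousOn_invFunOn_image hU fun _ hVU hV =>
    (hφ.analyticOnNhd hU).isOpen_image_of_injOn hinj hVU hV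

theorem Set.InjOn.eventually_deriv_ne_zero (hinj : InjOn φ U) (hU : IsOpen U)
    (hφ : DifferentiableOn ℂ φ U) {z : ℂ} (hz : z ∈ U) :
    ∀ᶠ w in 𝓝[≠] z, deriv φ w ≠ 0 := by
  refine ((hφ.analyticOnNhd hU).deriv z hz).eventually_eq_zero_or_eventually_ne_zero.resolve_left
    fun hzero => hinj.not_eventually_eq (hU.mem_nhds hz) ?_
  obtain ⟨ε, hε, hball⟩ := eventually_nhds_iff_ball.1 (hzero.and (hU.eventually_mem hz))
  filter_upwards [ball_mem_nhds z hε] with w hw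
  exact isOpen_ball.is_const_of_deriv_eq_zero (convex_ball z ε).isPreconnected
    (hφ.mono fun x hx => (hball x hx).2) (fun x hx => (hball x hx).1) hw (mem_ball_self hε)

/-- The inverse `σ` of `φ` is holomorphic off `φ z` and continuous at `φ z`, so by the removable
singularity theorem it is differentiable at `φ z`; the chain rule applied to `σ ∘ φ = id` then
forbids `φ' z = 0`. -/
theorem Set.InjOn.deriv_ne_zero (hinj : InjOn φ U) (hU : IsOpen U) (hφ : DifferentiableOn ℂ φ U)
    {z : ℂ} (hz : z ∈ U) : deriv φ z ≠ 0 := by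
  set σ := invFunOn φ U
  have hσc : ContinuousOn σ (φ '' U) := hφ.continuousOn_invFunOn_image hU hinj
  have hσφ : ∀ w ∈ U, σ (φ w) = w := hinj.leftInvOn_invFunOn
  have hφσ : ∀ t ∈ φ '' U, φ (σ t) = t := (surjOn_image φ U).rightInvOn_invFunOn
  have hV : IsOpen (φ '' U) := (hφ.analyticOnNhd hU).isOpen_image_of_injOn hinj subset_rfl hU
  have hVz : φ '' U ∈ 𝓝 (φ z) := hV.mem_nhds (mem_image_of_mem φ hz)
  have hσ_tendsto : Tendsto σ (𝓝[≠] (φ z)) (𝓝[≠] z) := by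
    refine tendsto_nhdsWithin_iff.2 ⟨?_, ?_⟩
    · have h := (hσc.continuousAt hVz).tendsto
      rw [hσφ z hz] at h
      exact h.mono_left nhdsWithin_le_nhds
    · filter_upwards [self_mem_nhdsWithin, nhdsWithin_le_nhds hVz] with t ht htV hσt
      exact ht (by rw [mem_singleton_iff, ← hφσ t htV, mem_singleton_iff.1 hσt])
  have hσd : ∀ᶠ t in 𝓝[≠] (φ z), DifferentiableAt ℂ σ t := by
    filter_upwards [hσ_tendsto.eventually (hinj.eventually_deriv_ne_zero hU hφ hz),
      nhdsWithin_le_nhds hVz] with t hne htV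
    have hVt : φ '' U ∈ 𝓝 t := hV.mem_nhds htV
    have hσt : σ t ∈ U := (surjOn_image φ U).mapsTo_invFunOn htV
    exact (HasDerivAt.of_local_left_inverse (hσc.continuousAt hVt)
      (hφ.differentiableAt (hU.mem_nhds hσt)).hasDerivAt hne
      (mem_of_superset hVt hφσ)).differentiableAt
  have hσz : DifferentiableAt ℂ σ (φ z) :=
    (Complex.analyticAt_of_differentiable_on_punctured_nhds_of_continuousAt hσd
      (hσc.continuousAt hVz)).differentiableAt
  have hcomp : HasDerivAt (σ ∘ φ) (deriv σ (φ z) * deriv φ z) z :=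
    hσz.hasDerivAt.comp z (hφ.differentiableAt (hU.mem_nhds hz)).hasDerivAt
  have hid : HasDerivAt (σ ∘ φ) 1 z :=
    (hasDerivAt_id z).congr_of_eventuallyEq (mem_of_superset (hU.mem_nhds hz) hσφ)
  intro h0
  rw [h0, mul_zero] at hcomp
  exact zero_ne_one (hcomp.unique hid)

end InjectiveHolomorphic

theorem Set.MapsTo.apply_iterate_eq_pow_mul {α M : Type*} [Monoid M] {f : α → α} {φ : α → M}
    {U : Set α} {c : M} (hfU : MapsTo f U U) (hconj : ∀ w ∈ U, φ (f w) = c * φ w) (n : ℕ)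
    {w : α} (hw : w ∈ U) : φ (f^[n] w) = c ^ n * φ w := by
  induction n with
  | zero => simp
  | succ n ih => rw [iterate_succ_apply', hconj _ (hfU.iterate n hw), ih, pow_succ', mul_assoc]

theorem Set.BijOn.exists_isCompact_of_norm_le {φ : ℂ → ℂ} {U : Set ℂ} {ρ r : ℝ}
    (hφbij : BijOn φ U (ball 0 ρ)) (hU : IsOpen U) (hφ : DifferentiableOn ℂ φ U) (hr : r < ρ) :
    ∃ K, IsCompact K ∧ K ⊆ U ∧ ∀ w ∈ U, ‖φ w‖ ≤ r → w ∈ K := by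
  have hσc := hφ.continuousOn_invFunOn_image hU hφbij.injOn
  rw [hφbij.image_eq] at hσc
  refine ⟨invFunOn φ U '' closedBall 0 r,
    (isCompact_closedBall 0 r).image_of_continuousOn (hσc.mono (closedBall_subset_ball hr)),
    ?_, fun w hw hwr => ⟨φ w, by simpa using hwr, hφbij.injOn.leftInvOn_invFunOn hw⟩⟩
  rintro _ ⟨t, ht, rfl⟩
  exact hφbij.surjOn.mapsTo_invFunOn (closedBall_subset_ball hr ht)

section SiegelDisc

variable {f φ : ℂ → ℂ} {U : Set ℂ} {ρ : ℝ} {lam : ℂ} {z : ℂ}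

theorem norm_apply_iterate_eq (hfU : MapsTo f U U) (hlam : ‖lam‖ = 1)
    (hconj : ∀ w ∈ U, φ (f w) = lam * φ w) (n : ℕ) {w : ℂ} (hw : w ∈ U) :
    ‖φ (f^[n] w)‖ = ‖φ w‖ := by
  rw [hfU.apply_iterate_eq_pow_mul hconj n hw, norm_mul, norm_pow, hlam, one_pow, one_mul]

theorem exists_forall_closedBall_norm_iterate_le (hU : IsOpen U) (hfU : MapsTo f U U)
    (hφ : DifferentiableOn ℂ φ U) (hφbij : BijOn φ U (ball 0 ρ)) (hlam : ‖lam‖ = 1)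
    (hconj : ∀ w ∈ U, φ (f w) = lam * φ w) (hz : z ∈ U) :
    ∃ δ > 0, ∃ M, ∀ n, ∀ w ∈ closedBall z δ, ‖f^[n] w‖ ≤ M := by
  obtain ⟨r, hzr, hrρ⟩ := exists_between (mem_ball_zero_iff.1 (hφbij.mapsTo hz))
  obtain ⟨K, hK, -, hKmem⟩ := hφbij.exists_isCompact_of_norm_le hU hφ hrρ
  obtain ⟨M, hM⟩ := hK.isBounded.exists_norm_le
  have hN : IsOpen (U ∩ φ ⁻¹' ball 0 r) := hφ.continuousOn.isOpen_inter_preimage hU isOpen_ball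
  obtain ⟨ε, hε, hεN⟩ := isOpen_iff.1 hN z ⟨hz, mem_ball_zero_iff.2 hzr⟩
  refine ⟨ε / 2, by positivity, M, fun n w hw => hM _ ?_⟩
  obtain ⟨hwU, hwr⟩ := hεN (closedBall_subset_ball (by linarith) hw)
  exact hKmem _ (hfU.iterate n hwU)
    ((norm_apply_iterate_eq hfU hlam hconj n hwU).trans_le (mem_ball_zero_iff.1 hwr).le)

theorem deriv_apply_iterate_mul_deriv_iterate (hU : IsOpen U) (hfd : Differentiable ℂ f)
    (hfU : MapsTo f U U) (hφ : DifferentiableOn ℂ φ U) (hconj : ∀ w ∈ U, φ (f w) = lam * φ w)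
    (hz : z ∈ U) (n : ℕ) :
    deriv φ (f^[n] z) * deriv (f^[n]) z = lam ^ n * deriv φ z := by
  have hev : φ ∘ f^[n] =ᶠ[𝓝 z] fun w => lam ^ n * φ w := by
    filter_upwards [hU.mem_nhds hz] with w hw using hfU.apply_iterate_eq_pow_mul hconj n hw
  rw [← deriv_comp z (hφ.differentiableAt (hU.mem_nhds (hfU.iterate n hz)))
    ((hfd.iterate n) z), hev.deriv_eq, deriv_const_mul _ (hφ.differentiableAt (hU.mem_nhds hz))]

theorem exists_le_norm_deriv_iterate (hU : IsOpen U) (hfd : Differentiable ℂ f)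
    (hfU : MapsTo f U U) (hφ : DifferentiableOn ℂ φ U) (hφbij : BijOn φ U (ball 0 ρ))
    (hlam : ‖lam‖ = 1) (hconj : ∀ w ∈ U, φ (f w) = lam * φ w) (hz : z ∈ U) :
    ∃ c > 0, ∀ n, c ≤ ‖deriv (f^[n]) z‖ := by
  obtain ⟨K, hK, hKU, hKmem⟩ :=
    hφbij.exists_isCompact_of_norm_le hU hφ (mem_ball_zero_iff.1 (hφbij.mapsTo hz))
  have horbit : ∀ n, f^[n] z ∈ K := fun n =>
    hKmem _ (hfU.iterate n hz) (norm_apply_iterate_eq hfU hlam hconj n hz).le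
  obtain ⟨C, hC⟩ :=
    hK.exists_bound_of_continuousOn ((hφ.analyticOnNhd hU).deriv.continuousOn.mono hKU)
  have hφz : deriv φ z ≠ 0 := hφbij.injOn.deriv_ne_zero hU hφ hz
  have hCpos : 0 < C := (norm_pos_iff.2 hφz).trans_le (hC z (horbit 0))
  refine ⟨‖deriv φ z‖ / C, by positivity, fun n => (div_le_iff₀ hCpos).2 ?_⟩
  calc ‖deriv φ z‖ = ‖deriv φ (f^[n] z)‖ * ‖deriv (f^[n]) z‖ := by
        rw [← norm_mul, deriv_apply_iterate_mul_deriv_iterate hU hfd hfU hφ hconj hz n, norm_mul,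
          norm_pow, hlam, one_pow, one_mul]
    _ ≤ C * ‖deriv (f^[n]) z‖ := by gcongr; exact hC _ (horbit n)
    _ = ‖deriv (f^[n]) z‖ * C := mul_comm _ _

end SiegelDisc

theorem norm_schwarzian_le {F : ℂ → ℂ} {z : ℂ} {c M₂ M₃ : ℝ} (hc : 0 < c)
    (hF' : c ≤ ‖deriv F z‖) (hF'' : ‖iteratedDeriv 2 F z‖ ≤ M₂)
    (hF''' : ‖iteratedDeriv 3 F z‖ ≤ M₃) :
    ‖schwarzian F z‖ ≤ M₃ / c + 3 / 2 * (M₂ / c) ^ 2 := by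
  have h3 : ‖iteratedDeriv 3 F z / deriv F z‖ ≤ M₃ / c := by
    rw [norm_div]
    exact div_le_div₀ ((norm_nonneg _).trans hF''') hF''' hc hF'
  have h2 : ‖iteratedDeriv 2 F z / deriv F z‖ ≤ M₂ / c := by
    rw [norm_div]
    exact div_le_div₀ ((norm_nonneg _).trans hF'') hF'' hc hF'
  calc ‖schwarzian F z‖
      ≤ ‖iteratedDeriv 3 F z / deriv F z‖
        + ‖(3 / 2 : ℂ)‖ * ‖iteratedDeriv 2 F z / deriv F z‖ ^ 2 := by
        rw [← norm_pow, ← norm_mul]; exact norm_sub_le _ _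
    _ ≤ M₃ / c + 3 / 2 * (M₂ / c) ^ 2 := by
        have : ‖(3 / 2 : ℂ)‖ = 3 / 2 := by norm_num
        rw [this]; gcongr

theorem norm_schwarzian_le_of_norm_le {F : ℂ → ℂ} {z : ℂ} {δ M c : ℝ} (hF : Differentiable ℂ F)
    (hδ : 0 < δ) (hM : ∀ w ∈ sphere z δ, ‖F w‖ ≤ M) (hc : 0 < c) (hF' : c ≤ ‖deriv F z‖) :
    ‖schwarzian F z‖ ≤
      Nat.factorial 3 * M / δ ^ 3 / c + 3 / 2 * (Nat.factorial 2 * M / δ ^ 2 / c) ^ 2 :=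
  norm_schwarzian_le hc hF'
    (Complex.norm_iteratedDeriv_le_of_forall_mem_sphere_norm_le 2 hδ hF.diffContOnCl hM)
    (Complex.norm_iteratedDeriv_le_of_forall_mem_sphere_norm_le 3 hδ hF.diffContOnCl hM)

theorem tendsto_div_pow_of_norm_le {a : ℕ → ℂ} {q : ℂ} {C : ℝ} (hq : 1 < ‖q‖)
    (ha : ∀ n, ‖a n‖ ≤ C) : Tendsto (fun n => a n / q ^ n) atTop (𝓝 0) := by
  have hq' : ‖q⁻¹‖ < 1 := by rw [norm_inv]; exact inv_lt_one_of_one_lt₀ hq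
  simpa [div_eq_inv_mul, inv_pow] using
    (tendsto_pow_atTop_nhds_zero_of_norm_lt_one hq').zero_mul_isBoundedUnder_le
      (isBoundedUnder_of ⟨C, ha⟩)

theorem stmt18_general (d : ℕ) (hd : 2 ≤ d) (p : Polynomial ℂ)
    (f : ℂ → ℂ) (hf : ∀ z, f z = p.eval z)
    (U : Set ℂ) (hU : IsOpen U) (hfU : Set.MapsTo f U U)
    (ρ : ℝ)
    (φ : ℂ → ℂ) (hφd : DifferentiableOn ℂ φ U)
    (hφbij : Set.BijOn φ U (Metric.ball (0 : ℂ) ρ))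
    (lam : ℂ) (hlam : ‖lam‖ = 1)
    (hconj : ∀ w ∈ U, φ (f w) = lam * φ w)
    (z : ℂ) (hz : z ∈ U) :
    Tendsto (fun n : ℕ => schwarzian (f^[n]) z / (d : ℂ) ^ (2 * n)) atTop (𝓝 0) := by
  have hfd : Differentiable ℂ f := funext hf ▸ p.differentiable
  obtain ⟨δ, hδ, M, hM⟩ := exists_forall_closedBall_norm_iterate_le hU hfU hφd hφbij hlam hconj hz
  obtain ⟨c, hc, hcn⟩ := exists_le_norm_deriv_iterate hU hfd hfU hφd hφbij hlam hconj hz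
  have hq : 1 < ‖(d : ℂ) ^ 2‖ := by
    rw [norm_pow, Complex.norm_natCast]
    exact one_lt_pow₀ (by exact_mod_cast hd) two_ne_zero
  simp_rw [pow_mul]
  exact tendsto_div_pow_of_norm_le hq fun n => norm_schwarzian_le_of_norm_le (hfd.iterate n) hδ
    (fun w hw => hM n w (sphere_subset_closedBall hw)) hc (hcn n)

/-- If `f` has a Siegel disc `U` (i.e. `φ : U → B(0,ρ)` is a
holomorphic bijection conjugating `f` on `U` to the rotation `w ↦ λw`, `|λ| = 1`),
then for every non-precritical `z ∈ U`, `S_{f^n}(z)/d^{2n} → 0`. -/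
theorem stmt18 (d : ℕ) (hd : 2 ≤ d) (p : Polynomial ℂ) (hdeg : p.natDegree = d)
    (f : ℂ → ℂ) (hf : ∀ z, f z = p.eval z)
    (U : Set ℂ) (hU : IsOpen U) (hfU : Set.MapsTo f U U)
    (ρ : ℝ) (hρ : 0 < ρ)
    (φ : ℂ → ℂ) (hφd : DifferentiableOn ℂ φ U)
    (hφbij : Set.BijOn φ U (Metric.ball (0 : ℂ) ρ))
    (lam : ℂ) (hlam : ‖lam‖ = 1)
    (hconj : ∀ w ∈ U, φ (f w) = lam * φ w)
    (z : ℂ) (hz : z ∈ U) (hzp : z ∉ precrit f) :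
    Tendsto (fun n : ℕ => schwarzian (f^[n]) z / (d : ℂ) ^ (2 * n)) atTop (𝓝 0) :=
  stmt18_general d hd p f hf U hU hfU ρ φ hφd hφbij lam hlam hconj z hz
end

section
/- Let f be a complex polynomial of degree d ≥ 2 whose filled Julia set K(f) is the closed unit disc {z ∈ ℂ : |z| ≤ 1}. Then f is affinely conjugate to z ↦ z^d: there exists an affine bijection A(z) = az + b, a ≠ 0 (in fact a rotation), such that A(f(z)) = (A(z))^d for all z ∈ ℂ. -/
open Filter Topology MeasureTheory Set

/-
Since the basin of infinity is fully invariant, `f⁻¹(D) = D` for the closed unit disc `D`, so the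
continuous map `f` sends the frontier of `D`, the unit circle, into itself. A polynomial `p` of
degree `d` with `|p| = 1` on the circle satisfies `p(z) · z^d · conj(p(1/conj z)) = z^d` there,
an identity of polynomials on an infinite set; hence `p ∣ X^d`, so `p = c z^d`, and scaling by a
`(d-1)`-st root of `c` conjugates it to `z^d`.
-/

open Polynomial Metric

theorem preimage_basinInf (f : ℂ → ℂ) : f ⁻¹' basinInf f = basinInf f := by
  ext z
  change Tendsto (fun n ↦ ‖f^[n] (f z)‖) atTop atTop ↔
    Tendsto (fun n ↦ ‖f^[n] z‖) atTop atTop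
  simp_rw [← Function.iterate_succ_apply]
  exact tendsto_add_atTop_iff_nat (f := fun n ↦ ‖f^[n] z‖) 1

theorem Continuous.mapsTo_frontier_of_preimage_eq {X : Type*} [TopologicalSpace X] {f : X → X}
    (hf : Continuous f) {s : Set X} (hs : f ⁻¹' s = s) : MapsTo f (frontier s) (frontier s) := by
  rw [frontier_eq_closure_inter_closure]
  rintro x ⟨hx, hxc⟩
  refine ⟨hf.closure_preimage_subset s ?_, hf.closure_preimage_subset sᶜ ?_⟩
  · rwa [hs]
  · rwa [preimage_compl, hs]

namespace Polynomial

theorem eval_reflect_map_conj {p : ℂ[X]} {N : ℕ} (hN : p.natDegree ≤ N) {z : ℂ}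
    (hz : ‖z‖ = 1) :
    ((p.map (starRingEnd ℂ)).reflect N).eval z = z ^ N * starRingEnd ℂ (p.eval z) := by
  have hzz : z * starRingEnd ℂ z = 1 := by
    rw [Complex.mul_conj', hz]; norm_num
  let := invertibleOfNonzero (right_ne_zero_of_mul_eq_one hzz)
  have h := eval₂_reflect_mul_pow (RingHom.id ℂ) (starRingEnd ℂ z) N (p.map (starRingEnd ℂ))
    (by rwa [natDegree_map])
  rw [invOf_eq_inv, inv_eq_of_mul_eq_one_left hzz, eval₂_id, eval₂_id, eval_map,
    eval₂_at_apply] at h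
  rw [← h, mul_left_comm, ← mul_pow, hzz, one_pow, mul_one]

theorem eq_C_leadingCoeff_mul_X_pow_of_dvd_X_pow {R : Type*} [CommRing R] [IsDomain R]
    {p : R[X]} {n : ℕ} (h : p ∣ X ^ n) : p = C p.leadingCoeff * X ^ p.natDegree := by
  obtain ⟨i, -, u, hu⟩ := (dvd_prime_pow prime_X n).1 h
  obtain ⟨c, hc, hcu⟩ := isUnit_iff.1 (u⁻¹).isUnit
  have hp : p = C c * X ^ i := by
    rw [hcu, mul_comm, Units.eq_mul_inv_iff_mul_eq, hu]
  rw [hp, leadingCoeff_C_mul_X_pow, natDegree_C_mul_X_pow i c hc.ne_zero]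

theorem eq_C_leadingCoeff_mul_X_pow_of_norm_eval_eq_one {p : ℂ[X]}
    (h : ∀ z : ℂ, ‖z‖ = 1 → ‖p.eval z‖ = 1) :
    p = C p.leadingCoeff * X ^ p.natDegree := by
  set q := (p.map (starRingEnd ℂ)).reflect p.natDegree
  suffices p * q = X ^ p.natDegree from eq_C_leadingCoeff_mul_X_pow_of_dvd_X_pow ⟨q, this.symm⟩
  have hsphere : (sphere (0 : ℂ) 1).Infinite :=
    (isPreconnected_sphere (by simp [Complex.rank_real_complex]) 0 1).infinite_of_nontrivial
      ⟨1, by simp, -1, by simp, by norm_num⟩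
  refine eq_of_infinite_eval_eq _ _ (hsphere.mono fun z hz ↦ ?_)
  rw [mem_sphere_zero_iff_norm] at hz
  rw [Set.mem_ofPred_eq, eval_mul, eval_reflect_map_conj le_rfl hz, mul_left_comm,
    Complex.mul_conj', h z hz, eval_pow, eval_X]
  norm_num

end Polynomial

theorem exists_mul_mul_pow_eq_mul_pow {K : Type*} [Field K] [IsAlgClosed K] {c : K}
    (hc : c ≠ 0) {d : ℕ} (hd : 1 < d) : ∃ a ≠ 0, ∀ z, a * (c * z ^ d) = (a * z) ^ d := by
  obtain ⟨a, ha⟩ := IsAlgClosed.exists_pow_nat_eq c (n := d - 1) (by omega)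
  refine ⟨a, fun h ↦ hc ?_, fun z ↦ ?_⟩
  · rw [← ha, h, zero_pow (by omega)]
  · rw [← ha, ← mul_assoc, ← pow_succ', Nat.sub_add_cancel hd.le, mul_pow]

/-- A polynomial of degree `d ≥ 2` whose filled Julia set
`K(f) = ℂ ∖ X_o(f)` is the closed unit disc is affinely conjugate to `z ↦ z^d`:
there is an affine bijection `A(z) = az + b` with `A(f(z)) = (A(z))^d` for all `z`. -/
theorem stmt19 (d : ℕ) (hd : 2 ≤ d) (p : Polynomial ℂ) (hdeg : p.natDegree = d)
    (f : ℂ → ℂ) (hf : ∀ z, f z = p.eval z)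
    (hK : (basinInf f)ᶜ = Metric.closedBall (0 : ℂ) 1) :
    ∃ a b : ℂ, a ≠ 0 ∧ ∀ z : ℂ, a * f z + b = (a * z + b) ^ d := by
  obtain rfl : f = fun z ↦ p.eval z := funext hf
  have hball : (p.eval ·) ⁻¹' closedBall 0 1 = closedBall 0 1 := by
    rw [← hK, preimage_compl, preimage_basinInf]
  have hsphere : ∀ z : ℂ, ‖z‖ = 1 → ‖p.eval z‖ = 1 := by
    simpa [MapsTo, frontier_closedBall'] using p.continuous.mapsTo_frontier_of_preimage_eq hball
  have hp : ∀ z, p.eval z = p.leadingCoeff * z ^ d := fun z ↦ by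
    simpa [hdeg] using congrArg (eval z) (eq_C_leadingCoeff_mul_X_pow_of_norm_eval_eq_one hsphere)
  have hc : p.leadingCoeff ≠ 0 := leadingCoeff_ne_zero.2 (ne_zero_of_natDegree_gt (hdeg ▸ hd))
  obtain ⟨a, ha, hconj⟩ := exists_mul_mul_pow_eq_mul_pow hc (by omega : 1 < d)
  exact ⟨a, 0, ha, fun z ↦ by simp only [add_zero, hp, hconj]⟩
end
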